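/- arXiv:2212.00221 — 7 statements merged into one kernel-verified Lean document; each statement's English description precedes it below -/
import Mathlib

section
/- Let n ≥ 2, let m be a positive integer, let A be an m × n real matrix and b ∈ ℝ^m, and let P = {x ∈ ℝ^n : A x ≤ b} (componentwise inequality). Then the image of P under the projection π : ℝ^n → ℝ^{n-1} that deletes the first coordinate is a polyhedron in ℝ^{n-1}; that is, there exist a positive integer m' , an m' × (n-1) real matrix A' and a vector b' ∈ ℝ^{m'} such that π(P) = {x' ∈ ℝ^{n-1} : A' x' ≤ b'}. -/
/-!
Fourier–Motzkin elimination. Write the rows of `A` as `(a i, r i)`. A point `y` lies in the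
projection iff the system `a i * t ≤ b i - r i ⬝ᵥ y` in the single unknown `t` is solvable, i.e.
iff the rows with `a i = 0` hold and every lower bound `(b j - r j ⬝ᵥ y) / a j` (from `a j < 0`)
is at most every upper bound `(b i - r i ⬝ᵥ y) / a i` (from `0 < a i`). After clearing the
denominators these conditions are again linear inequalities in `y`.
-/

theorem Set.Finite.exists_between_of_forall_le {α : Type*} [LinearOrder α] [Nonempty α]
    {s t : Set α} (hs : s.Finite) (ht : t.Finite) (hst : ∀ x ∈ s, ∀ y ∈ t, x ≤ y) :
    (upperBounds s ∩ lowerBounds t).Nonempty := by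
  rcases s.eq_empty_or_nonempty with rfl | hne
  · obtain ⟨z, hz⟩ := ht.bddBelow
    exact ⟨z, by simp, hz⟩
  · obtain ⟨z, hzs, hmax⟩ := Set.exists_max_image s id hs hne
    exact ⟨z, hmax, hst z hzs⟩

theorem exists_forall_mul_le_iff {𝕜 ι : Type*} [Field 𝕜] [LinearOrder 𝕜] [IsStrictOrderedRing 𝕜]
    [Finite ι] (a d : ι → 𝕜) :
    (∃ t, ∀ i, a i * t ≤ d i) ↔
      (∀ i, a i = 0 → 0 ≤ d i) ∧ ∀ i j, 0 < a i → a j < 0 → a j * d i ≤ a i * d j := by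
  constructor
  · rintro ⟨t, ht⟩
    refine ⟨fun i hi => by simpa [hi] using ht i, fun i j hi hj => ?_⟩
    calc a j * d i ≤ a j * (a i * t) := mul_le_mul_of_nonpos_left (ht i) hj.le
      _ = a i * (a j * t) := by ring
      _ ≤ a i * d j := mul_le_mul_of_nonneg_left (ht j) hi.le
  · rintro ⟨hzero, hpair⟩
    have hlower_le_upper : ∀ x ∈ (fun j => d j / a j) '' {j | a j < 0},
        ∀ y ∈ (fun i => d i / a i) '' {i | 0 < a i}, x ≤ y := by
      rintro _ ⟨j, hj, rfl⟩ _ ⟨i, hi, rfl⟩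
      rw [div_le_iff_of_neg hj, div_mul_eq_mul_div, div_le_iff₀ hi]
      linarith [hpair i j hi hj]
    obtain ⟨t, hlower, hupper⟩ := ((Set.toFinite _).image _).exists_between_of_forall_le
      ((Set.toFinite _).image _) hlower_le_upper
    refine ⟨t, fun i => ?_⟩
    rcases lt_trichotomy (a i) 0 with hi | hi | hi
    · rw [mul_comm, ← div_le_iff_of_neg hi]
      exact hlower ⟨i, hi, rfl⟩
    · simpa [hi] using hzero i hi
    · rw [mul_comm, ← le_div_iff₀ hi]
      exact hupper ⟨i, hi, rfl⟩

namespace Matrix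

theorem mulVec_cons_apply {R ι : Type*} [NonUnitalNonAssocSemiring R] [Fintype ι] {n : ℕ}
    (A : Matrix ι (Fin (n + 1)) R) (t : R) (y : Fin n → R) (i : ι) :
    (A *ᵥ Fin.cons t y) i = A i 0 * t + Fin.tail (A i) ⬝ᵥ y := by
  simp [mulVec, dotProduct, Fin.sum_univ_succ, Fin.tail]

variable {𝕜 ι : Type*} [Field 𝕜] [LinearOrder 𝕜] {n : ℕ}

/-- The `else` rows are the trivial inequality `0 ≤ 0`; they keep the row type independent of the
signs in the first column of `A`. -/
def fourierMotzkin (A : Matrix ι (Fin (n + 1)) 𝕜) : Matrix (ι ⊕ ι × ι) (Fin n) 𝕜 :=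
  of fun
    | .inl i => if A i 0 = 0 then Fin.tail (A i) else 0
    | .inr (i, j) =>
      if 0 < A i 0 ∧ A j 0 < 0 then A i 0 • Fin.tail (A j) - A j 0 • Fin.tail (A i) else 0

def fourierMotzkinBound (A : Matrix ι (Fin (n + 1)) 𝕜) (b : ι → 𝕜) : ι ⊕ ι × ι → 𝕜
  | .inl i => if A i 0 = 0 then b i else 0
  | .inr (i, j) => if 0 < A i 0 ∧ A j 0 < 0 then A i 0 * b j - A j 0 * b i else 0

@[simp]
theorem fourierMotzkin_inl (A : Matrix ι (Fin (n + 1)) 𝕜) (i : ι) :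
    A.fourierMotzkin (.inl i) = if A i 0 = 0 then Fin.tail (A i) else 0 :=
  rfl

@[simp]
theorem fourierMotzkin_inr (A : Matrix ι (Fin (n + 1)) 𝕜) (i j : ι) :
    A.fourierMotzkin (.inr (i, j)) =
      if 0 < A i 0 ∧ A j 0 < 0 then A i 0 • Fin.tail (A j) - A j 0 • Fin.tail (A i) else 0 :=
  rfl

theorem fourierMotzkin_mulVec_le_iff [IsStrictOrderedRing 𝕜] [Fintype ι]
    (A : Matrix ι (Fin (n + 1)) 𝕜) (b : ι → 𝕜) (y : Fin n → 𝕜) :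
    A.fourierMotzkin *ᵥ y ≤ A.fourierMotzkinBound b ↔ ∃ t, A *ᵥ Fin.cons t y ≤ b := by
  set d : ι → 𝕜 := fun i => b i - Fin.tail (A i) ⬝ᵥ y
  have hcons : ∀ t, A *ᵥ Fin.cons t y ≤ b ↔ ∀ i, A i 0 * t ≤ d i := fun t => by
    simp only [Pi.le_def, mulVec_cons_apply, d, le_sub_iff_add_le]
  simp only [hcons, exists_forall_mul_le_iff, Pi.le_def, Sum.forall, Prod.forall]
  refine and_congr (forall_congr' fun i => ?_) (forall₂_congr fun i j => ?_)
  · change A.fourierMotzkin (.inl i) ⬝ᵥ y ≤ A.fourierMotzkinBound b (.inl i) ↔ _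
    by_cases hi : A i 0 = 0 <;> simp [fourierMotzkinBound, hi, d]
  · change A.fourierMotzkin (.inr (i, j)) ⬝ᵥ y ≤ A.fourierMotzkinBound b (.inr (i, j)) ↔ _
    rw [← and_imp]
    by_cases hij : 0 < A i 0 ∧ A j 0 < 0
    · simp only [fourierMotzkin_inr, fourierMotzkinBound, if_pos hij, imp_iff_right hij,
        sub_dotProduct, smul_dotProduct, smul_eq_mul, d]
      constructor <;> intro h <;> linarith
    · simp [fourierMotzkinBound, hij]

theorem exists_fin_setOf_mulVec_le_eq {R ι κ : Type*} [NonUnitalNonAssocSemiring R] [Preorder R]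
    [Fintype ι] [Nonempty ι] [Fintype κ] (M : Matrix ι κ R) (c : ι → R) :
    ∃ (m' : ℕ) (_ : 0 < m') (M' : Matrix (Fin m') κ R) (c' : Fin m' → R),
      {y | M *ᵥ y ≤ c} = {y | M' *ᵥ y ≤ c'} := by
  let e := Fintype.equivFin ι
  refine ⟨_, Fintype.card_pos, M.submatrix e.symm id, c ∘ e.symm, ?_⟩
  ext y
  simp only [Set.mem_ofPred_eq, Pi.le_def, ← e.symm.forall_congr_right]
  rfl

end Matrix

theorem Fin.image_comp_succ {α : Type*} {n : ℕ} (S : Set (Fin (n + 1) → α)) :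
    (fun x => x ∘ Fin.succ) '' S = {y | ∃ t, Fin.cons t y ∈ S} := by
  ext y
  constructor
  · rintro ⟨x, hx, rfl⟩
    exact ⟨x 0, by rwa [← Fin.cons_self_tail x] at hx⟩
  · rintro ⟨t, ht⟩
    exact ⟨_, ht, Fin.tail_cons (α := fun _ => α) t y⟩

theorem projection_of_polyhedron_is_polyhedron_general
    (n m : ℕ) (hm : 0 < m)
    (A : Matrix (Fin m) (Fin (n + 1)) ℝ) (b : Fin m → ℝ) :
    ∃ (m' : ℕ) (_ : 0 < m') (A' : Matrix (Fin m') (Fin n) ℝ) (b' : Fin m' → ℝ),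
      (fun x : Fin (n + 1) → ℝ => x ∘ Fin.succ) '' {x | A.mulVec x ≤ b}
        = {x' : Fin n → ℝ | A'.mulVec x' ≤ b'} := by
  have : Nonempty (Fin m) := ⟨⟨0, hm⟩⟩
  obtain ⟨m', hm', A', b', hA'⟩ :=
    Matrix.exists_fin_setOf_mulVec_le_eq A.fourierMotzkin (A.fourierMotzkinBound b)
  refine ⟨m', hm', A', b', ?_⟩
  rw [← hA', Fin.image_comp_succ]
  ext y
  exact (A.fourierMotzkin_mulVec_le_iff b y).symm

/-- The projection of a polyhedron in ℝ^{n+1} (with n+1 ≥ 2) onto ℝ^n obtained by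
deleting the first coordinate is again a polyhedron. -/
theorem projection_of_polyhedron_is_polyhedron
    (n m : ℕ) (hn : 1 ≤ n) (hm : 0 < m)
    (A : Matrix (Fin m) (Fin (n + 1)) ℝ) (b : Fin m → ℝ) :
    ∃ (m' : ℕ) (_ : 0 < m') (A' : Matrix (Fin m') (Fin n) ℝ) (b' : Fin m' → ℝ),
      (fun x : Fin (n + 1) → ℝ => x ∘ Fin.succ) '' {x | A.mulVec x ≤ b}
        = {x' : Fin n → ℝ | A'.mulVec x' ≤ b'} :=
  projection_of_polyhedron_is_polyhedron_general n m hm A b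
end

section
/- (Weyl's theorem) Let W be an n × p real matrix and let C = {W y : y ∈ ℝ^p, y ≥ 0} be the finitely generated convex cone spanned by the columns of W. Then C is a polyhedral cone: there exist a positive integer m and an m × n real matrix A such that C = {x ∈ ℝ^n : A x ≤ 0}. -/
/-!
Weyl's theorem by Fourier–Motzkin elimination. A cone cut out by finitely many linear
inequalities stays of that form after adding a ray `ℝ≥0 • w`: a point `x` lies in the sum iff
some `t ≥ 0` satisfies every inequality at `x - t • w`, and eliminating `t` keeps the
inequalities that are nonnegative on `w` together with, for each pair of inequalities of
opposite signs on `w`, the positive combination of the two that vanishes on `w`. Starting from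
the zero cone and adding the columns of `W` one at a time gives the theorem.
-/

open Matrix

variable {𝕜 : Type*} [Field 𝕜] [LinearOrder 𝕜] [IsStrictOrderedRing 𝕜]

theorem exists_nonneg_forall_mul_le_iff {ι : Type*} (s : Finset ι) (α β : ι → 𝕜) :
    (∃ t, 0 ≤ t ∧ ∀ i ∈ s, t * β i ≤ α i) ↔
      (∀ i ∈ s, 0 ≤ β i → 0 ≤ α i) ∧
        ∀ i ∈ s, β i < 0 → ∀ j ∈ s, 0 < β j → β i * α j ≤ β j * α i := by
  constructor
  · rintro ⟨t, ht, hle⟩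
    refine ⟨fun i hi hβ => (mul_nonneg ht hβ).trans (hle i hi), fun i hi hβi j hj hβj => ?_⟩
    nlinarith [hle i hi, hle j hj]
  · rintro ⟨hnonneg, hpair⟩
    classical
    -- the largest lower bound on `t`; `hpair` puts it below each upper bound `α j / β j`
    let L : Finset 𝕜 := insert 0 ((s.filter (β · < 0)).image fun i => α i / β i)
    let t := L.max' (Finset.insert_nonempty _ _)
    have hlower : ∀ i ∈ s, β i < 0 → α i / β i ≤ t := fun i hi hβ =>
      L.le_max' _ (Finset.mem_insert_of_mem
        (Finset.mem_image_of_mem _ (Finset.mem_filter.2 ⟨hi, hβ⟩)))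
    refine ⟨t, L.le_max' _ (Finset.mem_insert_self _ _), fun j hj => ?_⟩
    rcases lt_trichotomy (β j) 0 with hβj | hβj | hβj
    · exact (div_le_iff_of_neg hβj).1 (hlower j hj hβj)
    · simpa [hβj] using hnonneg j hj hβj.ge
    · have hupper : t ≤ α j / β j := by
        refine Finset.max'_le _ _ _ fun l hl => ?_
        rcases Finset.mem_insert.1 hl with rfl | hl
        · exact div_nonneg (hnonneg j hj hβj.le) hβj.le
        obtain ⟨i, hi, rfl⟩ := Finset.mem_image.1 hl
        obtain ⟨hi, hβi⟩ := Finset.mem_filter.1 hi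
        rw [div_le_iff_of_neg hβi, div_mul_eq_mul_div, div_le_iff₀ hβj]
        linarith [hpair i hi hβi j hj hβj]
      exact (le_div_iff₀ hβj).1 hupper

namespace PointedCone

variable {M N : Type*} [AddCommGroup M] [Module 𝕜 M] [AddCommGroup N] [Module 𝕜 N]
  {p : M →ₗ[𝕜] N →ₗ[𝕜] 𝕜}

lemma mem_sup_hull_singleton_iff {C : PointedCone 𝕜 N} {w x : N} :
    x ∈ C ⊔ hull 𝕜 {w} ↔ ∃ t : 𝕜, 0 ≤ t ∧ x - t • w ∈ C := by
  simp only [Submodule.mem_sup, Submodule.mem_span_singleton]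
  constructor
  · rintro ⟨y, hy, _, ⟨t, rfl⟩, rfl⟩
    exact ⟨t, t.2, by simpa [Nonneg.coe_smul] using hy⟩
  · rintro ⟨t, ht, hx⟩
    exact ⟨_, hx, _, ⟨⟨t, ht⟩, rfl⟩, by simp [Nonneg.mk_smul]⟩

lemma DualFG.sup_hull_singleton {C : PointedCone 𝕜 N} (hC : C.DualFG p) (w : N) :
    (C ⊔ hull 𝕜 {w}).DualFG p := by
  classical
  obtain ⟨s, rfl⟩ := hC
  refine ⟨s.filter (0 ≤ p · w) ∪ Finset.image₂ (fun a b => p b w • a - p a w • b)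
      (s.filter (p · w < 0)) (s.filter (0 < p · w)), ?_⟩
  ext x
  have hshift (t : 𝕜) : x - t • w ∈ dual p s ↔ ∀ a ∈ s, t * p a w ≤ p a x := by
    simp [sub_nonneg]
  simp only [mem_sup_hull_singleton_iff, hshift, exists_nonneg_forall_mul_le_iff]
  simp only [mem_dual, Finset.mem_coe, Finset.forall_mem_union, Finset.forall_mem_image₂,
    Finset.mem_filter, and_imp]
  simp

lemma dualFG_of_fg (hbot : (⊥ : PointedCone 𝕜 N).DualFG p) {C : PointedCone 𝕜 N} (hC : C.FG) :
    C.DualFG p := by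
  classical
  obtain ⟨s, rfl⟩ := hC
  induction s using Finset.induction_on with
  | empty => simpa using hbot
  | insert w s _ ih =>
    rw [Finset.coe_insert, Submodule.span_insert, sup_comm]
    exact ih.sup_hull_singleton w

variable {σ : Type*}

lemma mem_hull_range_transpose_iff {ι : Type*} [Fintype ι] (W : Matrix σ ι 𝕜) {x : σ → 𝕜} :
    x ∈ hull 𝕜 (Set.range fun j => Wᵀ j) ↔ ∃ y, 0 ≤ y ∧ x = W *ᵥ y := by
  rw [Submodule.mem_span_range_iff_exists_fun]
  constructor
  · rintro ⟨c, rfl⟩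
    exact ⟨fun j => c j, fun j => (c j).2, by ext; simp [mulVec_eq_sum, Nonneg.coe_smul]⟩
  · rintro ⟨y, hy, rfl⟩
    exact ⟨fun j => ⟨y j, hy j⟩, by ext; simp [mulVec_eq_sum, Nonneg.mk_smul]⟩

variable [Fintype σ]

lemma dualFG_bot_dotProductBilin :
    (⊥ : PointedCone 𝕜 (σ → 𝕜)).DualFG (dotProductBilin 𝕜 𝕜) := by
  classical
  refine ⟨Finset.univ.image (fun i => -Pi.single i 1) ∪ Finset.univ.image (Pi.single · 1), ?_⟩
  ext x
  simp only [mem_dual, Finset.mem_coe, Finset.forall_mem_union, Finset.forall_mem_image,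
    Finset.mem_univ, forall_const, dotProductBilin_apply_apply, single_one_dotProduct,
    neg_dotProduct, Left.nonneg_neg_iff, Submodule.mem_bot, ← forall_and, ← le_antisymm_iff,
    funext_iff, Pi.zero_apply]

lemma DualFG.exists_matrix {C : PointedCone 𝕜 (σ → 𝕜)} (hC : C.DualFG (dotProductBilin 𝕜 𝕜)) :
    ∃ (m : ℕ) (A : Matrix (Fin (m + 1)) σ 𝕜), (C : Set (σ → 𝕜)) = {x | A *ᵥ x ≤ 0} := by
  obtain ⟨s, rfl⟩ := hC
  refine ⟨s.card, of (vecCons 0 fun k => -(s.equivFin.symm k : σ → 𝕜)), ?_⟩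
  ext x
  simp only [SetLike.mem_coe, mem_dual, Set.mem_ofPred_eq, cons_mulVec, Pi.le_def,
    Fin.forall_fin_succ, cons_val_zero, cons_val_succ, zero_dotProduct, le_refl, true_and,
    Pi.zero_apply, mulVec, of_apply, neg_dotProduct, neg_nonpos, dotProductBilin_apply_apply]
  exact ⟨fun h k => h (s.equivFin.symm k).2, fun h a ha => by simpa using h (s.equivFin ⟨a, ha⟩)⟩

end PointedCone

/-- Weyl's theorem: every finitely generated convex cone {W y : y ≥ 0} is a
polyhedral cone {x : A x ≤ 0}. -/
theorem weyl_finitely_generated_cone_is_polyhedral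
    (n p : ℕ) (W : Matrix (Fin n) (Fin p) ℝ) :
    ∃ (m : ℕ) (_ : 0 < m) (A : Matrix (Fin m) (Fin n) ℝ),
      {x : Fin n → ℝ | ∃ y : Fin p → ℝ, 0 ≤ y ∧ x = W.mulVec y}
        = {x : Fin n → ℝ | A.mulVec x ≤ 0} := by
  obtain ⟨m, A, hA⟩ := (PointedCone.dualFG_of_fg PointedCone.dualFG_bot_dotProductBilin
    (Submodule.fg_span (Set.finite_range fun j => Wᵀ j))).exists_matrix
  refine ⟨m + 1, m.succ_pos, A, ?_⟩
  rw [← hA]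
  exact Set.ext fun x => (PointedCone.mem_hull_range_transpose_iff W).symm
end

section
/- Let A be an m × n real matrix and let B be an n × p real matrix. If {x ∈ ℝ^n : A x ≤ 0} = {B y : y ∈ ℝ^p, y ≥ 0}, then {x ∈ ℝ^n : Bᵀ x ≤ 0} = {Aᵀ y : y ∈ ℝ^m, y ≥ 0}, where Aᵀ and Bᵀ denote matrix transposes. -/
open Finset Topology

variable {E : Type*} [NormedAddCommGroup E] [NormedSpace ℝ E]

/-- nonneg combinations of finitely many vectors -/
def coneOf {q : ℕ} (v : Fin q → E) : Set E :=
  {x | ∃ c : Fin q → ℝ, 0 ≤ c ∧ x = ∑ i, c i • v i}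


lemma coneOf_subset_union {q : ℕ} (v : Fin (q+1) → E) (a : Fin (q+1) → ℝ)
    (ha : ∑ i, a i • v i = 0) (i₁ : Fin (q+1)) (hpos : 0 < a i₁) :
    coneOf v ⊆ ⋃ i : Fin (q+1), coneOf (v ∘ i.succAbove) := by
  rintro x ⟨c, hc, rfl⟩
  set s : Finset (Fin (q+1)) := Finset.univ.filter (fun i => 0 < a i) with hs
  have hi₁s : i₁ ∈ s := by simp [hs, hpos]
  obtain ⟨i₀, hi₀, hmin⟩ := s.exists_min_image (fun i => c i / a i) ⟨i₁, hi₁s⟩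
  have hai₀ : 0 < a i₀ := by simpa [hs] using hi₀
  set t : ℝ := c i₀ / a i₀ with ht
  have ht0 : 0 ≤ t := div_nonneg (hc i₀) hai₀.le
  set c' : Fin (q+1) → ℝ := fun i => c i - t * a i with hc'
  have hc'0 : ∀ i, 0 ≤ c' i := by
    intro i
    by_cases hai : 0 < a i
    · have := hmin i (by simp [hs, hai])
      have : t * a i ≤ c i := by
        rw [← le_div_iff₀ hai]; exact this
      simpa [hc'] using this
    · push_neg at hai
      have : t * a i ≤ 0 := mul_nonpos_of_nonneg_of_nonpos ht0 hai
      have := sub_nonneg.mpr (this.trans (hc i))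
      simpa [hc'] using (hc i).trans (by nlinarith : c i ≤ c i - t * a i)
  have hci₀ : c' i₀ = 0 := by
    simp [hc', ht, div_mul_cancel₀ _ hai₀.ne']
  have hsum : ∑ i, c' i • v i = ∑ i, c i • v i := by
    simp only [hc', sub_smul, Finset.sum_sub_distrib, mul_smul]
    rw [← Finset.smul_sum, ha, smul_zero, sub_zero]
  refine Set.mem_iUnion.mpr ⟨i₀, ⟨fun j => c' (i₀.succAbove j), fun j => hc'0 _, ?_⟩⟩
  rw [← hsum, Fin.sum_univ_succAbove (fun i => c' i • v i) i₀, hci₀, zero_smul, zero_add]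
  rfl

lemma isClosed_coneOf : ∀ (q : ℕ) (v : Fin q → E), IsClosed (coneOf v) := by
  intro q
  induction q using Nat.strong_induction_on with
  | _ q IH =>
  intro v
  by_cases hli : LinearIndependent ℝ v
  · -- closed embedding argument
    set f : (Fin q → ℝ) →ₗ[ℝ] E :=
      { toFun := fun c => ∑ i, c i • v i
        map_add' := by intro a b; simp [add_smul, Finset.sum_add_distrib]
        map_smul' := by intro r a; simp [smul_smul, Finset.smul_sum] } with hf
    have hker : LinearMap.ker f = ⊥ := by
      rw [LinearMap.ker_eq_bot']
      intro c hc
      funext i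
      exact Fintype.linearIndependent_iff.mp hli c hc i
    have hce : IsClosedEmbedding f := f.isClosedEmbedding_of_injective hker
    have : coneOf v = f '' (Set.Ici 0) := by
      ext x
      constructor
      · rintro ⟨c, hc, rfl⟩; exact ⟨c, hc, rfl⟩
      · rintro ⟨c, hc, rfl⟩; exact ⟨c, hc, rfl⟩
    rw [this]
    exact hce.isClosedMap _ isClosed_Ici
  · -- dependent: reduce to smaller cones
    rcases q with _ | q
    · exact absurd linearIndependent_empty_type hli
    rw [Fintype.linearIndependent_iff] at hli
    push_neg at hli
    obtain ⟨a, ha0, i₁, hi₁⟩ := hli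
    have hsub : coneOf v ⊆ ⋃ i : Fin (q+1), coneOf (v ∘ i.succAbove) := by
      rcases (show a i₁ ≠ 0 from hi₁).lt_or_gt with h1 | h1
      · refine coneOf_subset_union v (-a) ?_ i₁ (by simpa using h1)
        have : ∑ i, (-a) i • v i = -∑ i, a i • v i := by
          simp [neg_smul]
        rw [this, ha0, neg_zero]
      · exact coneOf_subset_union v a ha0 i₁ h1
    have hsup : (⋃ i : Fin (q+1), coneOf (v ∘ i.succAbove)) ⊆ coneOf v := by
      rintro x hx
      obtain ⟨i, ⟨c, hc, rfl⟩⟩ := Set.mem_iUnion.mp hx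
      set d : Fin (q+1) → ℝ := Fin.insertNth (α := fun _ => ℝ) i 0 c with hd
      refine ⟨d, ?_, ?_⟩
      · intro j
        exact i.succAboveCases (by simp [hd]) (fun j => by simpa [hd] using hc j) j
      · rw [Fin.sum_univ_succAbove (fun j => d j • v j) i]
        simp [hd, Fin.insertNth_apply_same, Fin.insertNth_apply_succAbove]
    have : coneOf v = ⋃ i : Fin (q+1), coneOf (v ∘ i.succAbove) :=
      Set.Subset.antisymm hsub hsup
    rw [this]
    exact isClosed_iUnion_of_finite fun i => IH q (Nat.lt_succ_self q) _


/-- `coneOf v` as a `ConvexCone`. -/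
def coneOfCone {q : ℕ} (v : Fin q → E) : ConvexCone ℝ E where
  carrier := coneOf v
  smul_mem' := by
    rintro r hr x ⟨c, hc, rfl⟩
    exact ⟨r • c, fun i => mul_nonneg hr.le (hc i),
      by simp [Finset.smul_sum, smul_smul]⟩
  add_mem' := by
    rintro x ⟨c, hc, rfl⟩ y ⟨d, hd, rfl⟩
    exact ⟨c + d, fun i => add_nonneg (hc i) (hd i),
      by simp [add_smul, Finset.sum_add_distrib]⟩

/-- Duality: if {x : A x ≤ 0} = {B y : y ≥ 0}, then {x : Bᵀ x ≤ 0} = {Aᵀ y : y ≥ 0}. -/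
theorem cone_duality (m n p : ℕ) (A : Matrix (Fin m) (Fin n) ℝ)
    (B : Matrix (Fin n) (Fin p) ℝ)
    (h : {x : Fin n → ℝ | A.mulVec x ≤ 0}
        = {x : Fin n → ℝ | ∃ y : Fin p → ℝ, 0 ≤ y ∧ x = B.mulVec y}) :
    {x : Fin n → ℝ | B.transpose.mulVec x ≤ 0}
      = {x : Fin n → ℝ | ∃ y : Fin m → ℝ, 0 ≤ y ∧ x = A.transpose.mulVec y} := by
  have hAT : ∀ y : Fin m → ℝ, A.transpose.mulVec y = ∑ i, y i • A i := by
    intro y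
    funext j
    simp [Matrix.mulVec, dotProduct, Matrix.transpose_apply, mul_comm,
      Finset.sum_apply]
  ext x
  simp only [Set.mem_setOf_eq]
  constructor
  · -- hard direction: via separation
    intro hx
    by_contra hnx
    -- view everything in Euclidean space
    let E := EuclideanSpace ℝ (Fin n)
    let v : Fin m → E := fun i => WithLp.toLp 2 (A i)
    let K : ConvexCone ℝ E := coneOfCone v
    have hKne : (K : Set E).Nonempty := ⟨0, ⟨0, le_rfl, by simp⟩⟩
    have hKcl : IsClosed (K : Set E) := isClosed_coneOf m v
    have hxK : (WithLp.toLp 2 x : E) ∉ K := by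
      intro hxk
      obtain ⟨c, hc, hxe⟩ := hxk
      exact hnx ⟨c, hc, by
        rw [hAT]; have := congrArg WithLp.ofLp hxe; exact this.trans (WithLp.ofLp_sum (p := 2) (V := Fin n → ℝ) _ _)⟩
    obtain ⟨zE, hz1, hz2⟩ :=
      ProperCone.hyperplane_separation' (C := ⟨K.toPointedCone
        (⟨0, le_rfl, by simp⟩ : (0 : E) ∈ K), hKcl⟩) hxK
    set z : Fin n → ℝ := WithLp.ofLp zE with hzdef
    -- `A (-z) ≤ 0`
    have hAz : A.mulVec (-z) ≤ 0 := by
      intro i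
      have hvi : (v i) ∈ K := ⟨Pi.single i 1, by
          intro k; by_cases hk : k = i <;> simp [hk, Pi.single_apply],
        by simp [Pi.single_apply, ite_smul]⟩
      have := hz1 (v i) hvi
      rw [PiLp.inner_apply] at this
      simp only [RCLike.inner_apply, conj_trivial] at this
      have : (0:ℝ) ≤ ∑ j, v i j * z j := by simpa only [mul_comm] using this
      have hcalc : A.mulVec (-z) i = -∑ j, v i j * z j := by
        simp only [Matrix.mulVec, dotProduct, v,
          show ∀ j, (-z) j = -(z j) from fun j => rfl, mul_neg, Finset.sum_neg_distrib]
      rw [hcalc]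
      simpa using this
    -- hence `-z = B w` for some `w ≥ 0`
    have : (-z : Fin n → ℝ) ∈ {x : Fin n → ℝ | A.mulVec x ≤ 0} := hAz
    rw [h] at this
    obtain ⟨w, hw, hzw⟩ := this
    -- contradiction with `⟪z, x⟫ < 0`
    rw [PiLp.inner_apply] at hz2
    simp only [RCLike.inner_apply, conj_trivial] at hz2
    have hpos : (0:ℝ) < ∑ j, (-z) j * x j := by
      have : ∑ j, (-z) j * x j = -∑ j, z j * x j := by
        simp only [show ∀ j, (-z) j = -(z j) from fun j => rfl, neg_mul,
          Finset.sum_neg_distrib]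
      rw [this]
      linarith
    have hneg : ∑ j, (-z) j * x j ≤ 0 := by
      have heq : ∑ j, (-z) j * x j = dotProduct (B.mulVec w) x := by
        rw [← hzw]; rfl
      rw [heq, ← dotProduct_comm, Matrix.dotProduct_mulVec,
        ← Matrix.mulVec_transpose]
      exact Finset.sum_nonpos fun k _ => mul_nonpos_of_nonpos_of_nonneg (hx k) (hw k)
    linarith
  · -- easy direction
    rintro ⟨y, hy, rfl⟩
    intro j
    have hu : A.mulVec (B.mulVec (Pi.single j 1)) ≤ 0 := by
      have : B.mulVec (Pi.single j 1) ∈ {x : Fin n → ℝ | A.mulVec x ≤ 0} := by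
        rw [h]
        exact ⟨Pi.single j 1, by
          intro k; by_cases hk : k = j <;> simp [hk, Pi.single_apply], rfl⟩
      exact this
    have hcalc : B.transpose.mulVec (A.transpose.mulVec y) j
        = dotProduct (A.mulVec (B.mulVec (Pi.single j 1))) y := by
      simp only [Matrix.mulVec, dotProduct, Matrix.transpose_apply,
        Pi.single_apply, mul_ite, mul_one, mul_zero, Finset.sum_ite_eq',
        Finset.mem_univ, if_true, Finset.sum_mul, Finset.mul_sum]
      rw [Finset.sum_comm]
      refine Finset.sum_congr rfl fun i _ => Finset.sum_congr rfl fun k _ => by ring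
    rw [hcalc] at *
    exact Finset.sum_nonpos fun i _ => mul_nonpos_of_nonpos_of_nonneg (hu i) (hy i)
end

section
/- (Minkowski's theorem) Let A be an m × n real matrix. Then the polyhedral cone {x ∈ ℝ^n : A x ≤ 0} is a finitely generated convex cone: there exist a positive integer p and an n × p real matrix B such that {x ∈ ℝ^n : A x ≤ 0} = {B y : y ∈ ℝ^p, y ≥ 0}. -/
open Matrix

namespace MinkowskiAux

variable {n : ℕ}

/-- The cone generated by a finite family of vectors. -/
def coneOf {ι : Type} [Fintype ι] (c : ι → (Fin n → ℝ)) : Set (Fin n → ℝ) :=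
  {x | ∃ y : ι → ℝ, (∀ i, 0 ≤ y i) ∧ x = ∑ i, y i • c i}

lemma dot_sum_smul {ι : Type} [Fintype ι] (a : Fin n → ℝ) (y : ι → ℝ) (c : ι → Fin n → ℝ) :
    a ⬝ᵥ (∑ i, y i • c i) = ∑ i, y i * (a ⬝ᵥ c i) := by
  simp only [dotProduct, Finset.sum_apply, Pi.smul_apply, smul_eq_mul, Finset.mul_sum]
  rw [Finset.sum_comm]
  refine Finset.sum_congr rfl fun i _ => ?_
  exact Finset.sum_congr rfl fun j _ => by ring

lemma self_mem_coneOf {ι : Type} [Fintype ι] (c : ι → (Fin n → ℝ)) (j : ι) :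
    c j ∈ coneOf c := by
  classical
  refine ⟨fun k => if k = j then 1 else 0, fun k => by by_cases h : k = j <;> simp [h], ?_⟩
  simp [ite_smul]

lemma main (m : ℕ) (A : Fin m → (Fin n → ℝ)) :
    ∃ (ι : Type) (_ : Fintype ι) (c : ι → (Fin n → ℝ)),
      {x | ∀ i, A i ⬝ᵥ x ≤ 0} = coneOf c := by
  induction m with
  | zero =>
    refine ⟨Fin n × Bool, inferInstance,
      fun ib => if ib.2 then Pi.single ib.1 1 else -(Pi.single ib.1 1), ?_⟩
    ext x
    simp only [Set.mem_setOf_eq, coneOf]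
    constructor
    · intro _
      refine ⟨fun ib => if ib.2 then max (x ib.1) 0 else max (-(x ib.1)) 0,
        fun i => by dsimp only; split <;> positivity, ?_⟩
      rw [Fintype.sum_prod_type]
      have key : ∀ i : Fin n, (∑ b : Bool,
          (if b then max (x i) 0 else max (-(x i)) 0) •
            (if b then (Pi.single i 1 : Fin n → ℝ) else -(Pi.single i 1)))
            = (Pi.single i (x i) : Fin n → ℝ) := by
        intro i
        rw [Fintype.sum_bool]
        simp only [Bool.false_eq_true, if_true, if_false, smul_neg]
        rw [← sub_eq_add_neg, ← sub_smul, max_zero_sub_max_neg_zero_eq_self,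
          ← Pi.single_smul]
        simp
      refine Eq.trans (Finset.univ_sum_single x).symm ?_
      exact Finset.sum_congr rfl fun i _ => (key i).symm
    · intro _ i; exact i.elim0
  | succ m ih =>
    obtain ⟨ι, fι, c, hc⟩ := ih (fun i => A i.succ)
    set a : Fin n → ℝ := A 0 with ha
    set al : ι → ℝ := fun i => a ⬝ᵥ c i with hal
    have halp : ∀ i, a ⬝ᵥ c i = al i := fun _ => rfl
    have halp0 : ∀ i, A 0 ⬝ᵥ c i = al i := fun _ => rfl
    set d : ι ⊕ ι × ι → (Fin n → ℝ) := Sum.elim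
      (fun i => if al i ≤ 0 then c i else 0)
      (fun p => if 0 < al p.1 ∧ al p.2 < 0 then al p.1 • c p.2 - al p.2 • c p.1 else 0)
      with hd
    refine ⟨ι ⊕ ι × ι, inferInstance, d, ?_⟩
    have hcc : ∀ (j : ι) (i : Fin m), A i.succ ⬝ᵥ c j ≤ 0 := by
      intro j i
      have : c j ∈ coneOf c := self_mem_coneOf c j
      rw [← hc] at this
      exact this i
    have hdk : ∀ (k : ι ⊕ ι × ι) (i : Fin (m+1)), A i ⬝ᵥ d k ≤ 0 := by
      rintro (j | ⟨i, j⟩) r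
      · simp only [hd, Sum.elim_inl]
        split
        · next h =>
          refine Fin.cases ?_ ?_ r
          · exact h
          · intro i; exact hcc j i
        · simp
      · simp only [hd, Sum.elim_inr]
        split
        · next h =>
          obtain ⟨hi, hj⟩ := h
          have expand : ∀ v : Fin n → ℝ,
              v ⬝ᵥ (al i • c j - al j • c i) = al i * (v ⬝ᵥ c j) - al j * (v ⬝ᵥ c i) := by
            intro v
            rw [dotProduct_sub, dotProduct_smul, dotProduct_smul]
            simp [smul_eq_mul]
          refine Fin.cases ?_ ?_ r
          · rw [expand, halp0, halp0]
            have : al i * al j - al j * al i = 0 := by ring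
            linarith
          · intro r
            rw [expand]
            have h1 : al i * (A r.succ ⬝ᵥ c j) ≤ 0 :=
              mul_nonpos_of_nonneg_of_nonpos hi.le (hcc j r)
            have h2 : 0 ≤ al j * (A r.succ ⬝ᵥ c i) := by
              nlinarith [hcc i r, hj.le]
            linarith
        · simp
    ext x
    simp only [Set.mem_setOf_eq]
    constructor
    · -- hard direction
      intro hx
      have hx0 : a ⬝ᵥ x ≤ 0 := hx 0
      have hxc : x ∈ coneOf c := by
        rw [← hc]; exact fun i => hx i.succ
      obtain ⟨y, hy, hxy⟩ := hxc
      set s : ℝ := ∑ i, if 0 < al i then y i * al i else 0 with hs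
      set t : ℝ := ∑ i, if al i < 0 then y i * (-al i) else 0 with ht
      have hs0 : 0 ≤ s := Finset.sum_nonneg fun i _ => by
        split
        · next h => exact mul_nonneg (hy i) h.le
        · exact le_refl 0
      have ht0 : 0 ≤ t := Finset.sum_nonneg fun i _ => by
        split
        · next h => exact mul_nonneg (hy i) (by linarith)
        · exact le_refl 0
      have hax : a ⬝ᵥ x = s - t := by
        rw [hxy, dot_sum_smul]
        simp only [halp]
        rw [hs, ht, ← Finset.sum_sub_distrib]
        refine Finset.sum_congr rfl fun i _ => ?_
        rcases lt_trichotomy (al i) 0 with h | h | h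
        · rw [if_neg (by linarith), if_pos h]; ring
        · rw [if_neg (by simp [h]), if_neg (by simp [h]), h]; ring
        · rw [if_pos h, if_neg (by linarith)]; ring
      have hst : s ≤ t := by linarith
      by_cases hsz : s = 0
      · rw [hs] at hsz
        have hyz : ∀ i, 0 < al i → y i = 0 := by
          intro i hi
          have h0 : (if 0 < al i then y i * al i else 0) = 0 :=
            (Finset.sum_eq_zero_iff_of_nonneg (fun j _ => by
              split
              · next h => exact mul_nonneg (hy j) h.le
              · exact le_refl 0)).mp hsz i (Finset.mem_univ i)
          rw [if_pos hi] at h0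
          rcases mul_eq_zero.mp h0 with h | h
          · exact h
          · exact absurd h (ne_of_gt hi)
        refine ⟨Sum.elim (fun i => if al i ≤ 0 then y i else 0) 0, ?_, ?_⟩
        · rintro (j | q)
          · dsimp only [Sum.elim_inl]
            split
            · exact hy j
            · exact le_refl 0
          · exact le_refl 0
        · rw [hxy, Fintype.sum_sum_type]
          simp only [Sum.elim_inl, Sum.elim_inr, Pi.zero_apply, zero_smul,
            Finset.sum_const_zero, add_zero, hd]
          refine Finset.sum_congr rfl fun i _ => ?_
          by_cases h : al i ≤ 0
          · rw [if_pos h, if_pos h]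
          · rw [if_neg h, if_neg h, hyz i (lt_of_not_ge h)]; simp
      · have hsp : 0 < s := lt_of_le_of_ne hs0 (Ne.symm hsz)
        have htp : 0 < t := lt_of_lt_of_le hsp hst
        have htne : t ≠ 0 := ne_of_gt htp
        refine ⟨Sum.elim
          (fun i => if al i < 0 then y i * (1 - s / t) else if al i ≤ 0 then y i else 0)
          (fun p => if 0 < al p.1 ∧ al p.2 < 0 then y p.1 * y p.2 / t else 0), ?_, ?_⟩
        · rintro (j | ⟨i, j⟩)
          · dsimp only [Sum.elim_inl]
            have h1 : 0 ≤ 1 - s / t := by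
              rw [sub_nonneg, div_le_one htp]; exact hst
            split
            · exact mul_nonneg (hy j) h1
            · split
              · exact hy j
              · exact le_refl 0
          · dsimp only [Sum.elim_inr]
            split
            · exact div_nonneg (mul_nonneg (hy i) (hy j)) ht0
            · exact le_refl 0
        · rw [hxy, Fintype.sum_sum_type, Fintype.sum_prod_type]
          simp only [Sum.elim_inl, Sum.elim_inr, hd]
          have hpt : ∀ i j : ι,
              (if 0 < al i ∧ al j < 0 then y i * y j / t else 0) •
                (if 0 < al i ∧ al j < 0 then al i • c j - al j • c i else (0 : Fin n → ℝ))
              = (if 0 < al i ∧ al j < 0 then (y i * y j / t * al i) else 0) • c j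
                - (if 0 < al i ∧ al j < 0 then (y i * y j / t * al j) else 0) • c i := by
            intro i j
            by_cases h : 0 < al i ∧ al j < 0
            · simp only [if_pos h, smul_sub, smul_smul]
            · simp only [if_neg h]; simp
          have h2 : (∑ i : ι, ∑ j : ι,
              (if 0 < al i ∧ al j < 0 then y i * y j / t else 0) •
                (if 0 < al i ∧ al j < 0 then al i • c j - al j • c i else (0 : Fin n → ℝ)))
              = (∑ j : ι, (if al j < 0 then y j * (s / t) else 0) • c j)
                - ∑ i : ι, (if 0 < al i then -(y i) else 0) • c i := by
            rw [Finset.sum_congr rfl fun i _ => Finset.sum_congr rfl fun j _ => hpt i j]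
            simp only [Finset.sum_sub_distrib]
            congr 1
            · rw [Finset.sum_comm]
              refine Finset.sum_congr rfl fun j _ => ?_
              rw [← Finset.sum_smul]
              congr 1
              by_cases hj : al j < 0
              · rw [if_pos hj]
                have step : ∀ i : ι,
                    (if 0 < al i ∧ al j < 0 then y i * y j / t * al i else 0)
                    = (if 0 < al i then y i * al i else 0) * (y j / t) := fun i => by
                  by_cases hi : 0 < al i
                  · rw [if_pos ⟨hi, hj⟩, if_pos hi]; ring
                  · rw [if_neg (fun hh => hi hh.1), if_neg hi]; ring
                rw [Finset.sum_congr rfl fun i _ => step i, ← Finset.sum_mul, ← hs]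
                ring
              · rw [if_neg hj]
                exact Finset.sum_eq_zero fun i _ => if_neg (fun hh => hj hh.2)
            · refine Finset.sum_congr rfl fun i _ => ?_
              rw [← Finset.sum_smul]
              congr 1
              by_cases hi : 0 < al i
              · rw [if_pos hi]
                have step : ∀ j : ι,
                    (if 0 < al i ∧ al j < 0 then y i * y j / t * al j else 0)
                    = (if al j < 0 then y j * (-al j) else 0) * (-(y i) / t) := fun j => by
                  by_cases hj : al j < 0
                  · rw [if_pos ⟨hi, hj⟩, if_pos hj]; ring
                  · rw [if_neg (fun hh => hj hh.2), if_neg hj]; ring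
                rw [Finset.sum_congr rfl fun j _ => step j, ← Finset.sum_mul, ← ht]
                field_simp
              · rw [if_neg hi]
                exact Finset.sum_eq_zero fun j _ => if_neg (fun hh => hi hh.1)
          rw [h2]
          have h1 : (∑ i : ι,
              (if al i < 0 then y i * (1 - s / t) else if al i ≤ 0 then y i else 0) •
                (if al i ≤ 0 then c i else (0 : Fin n → ℝ)))
              = ∑ i : ι,
                (if al i < 0 then y i * (1 - s / t) else if al i ≤ 0 then y i else 0) • c i := by
            refine Finset.sum_congr rfl fun i _ => ?_
            by_cases h : al i ≤ 0
            · simp only [if_pos h]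
            · simp only [if_neg h, if_neg (fun hh => h (le_of_lt hh))]; simp
          rw [h1, ← Finset.sum_sub_distrib, ← Finset.sum_add_distrib]
          refine Finset.sum_congr rfl fun i _ => ?_
          rw [← sub_smul, ← add_smul]
          congr 1
          rcases lt_trichotomy (al i) 0 with h | h | h
          · rw [if_pos h, if_pos h, if_neg (by linarith)]; ring
          · rw [if_neg (by simp [h]), if_pos (le_of_eq h), if_neg (by simp [h]),
              if_neg (by simp [h])]
            ring
          · rw [if_neg (by linarith), if_neg (by linarith), if_neg (by linarith), if_pos h]
            ring
    · rintro ⟨z, hz, hxz⟩ i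
      rw [hxz, dot_sum_smul]
      exact Finset.sum_nonpos fun k _ =>
        mul_nonpos_of_nonneg_of_nonpos (hz k) (hdk k i)

end MinkowskiAux

/-- Minkowski's theorem: every polyhedral cone {x : A x ≤ 0} is a finitely
generated convex cone {B y : y ≥ 0}. -/
theorem minkowski_polyhedral_cone_is_finitely_generated
    (m n : ℕ) (A : Matrix (Fin m) (Fin n) ℝ) :
    ∃ (p : ℕ) (_ : 0 < p) (B : Matrix (Fin n) (Fin p) ℝ),
      {x : Fin n → ℝ | A.mulVec x ≤ 0}
        = {x : Fin n → ℝ | ∃ y : Fin p → ℝ, 0 ≤ y ∧ x = B.mulVec y} := by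
  obtain ⟨ι, fι, c, hc⟩ := MinkowskiAux.main m (fun i => A i)
  set p := Fintype.card ι with hp
  let e : ι ≃ Fin p := Fintype.equivFin ι
  refine ⟨p + 1, Nat.succ_pos p,
    Matrix.of fun j k => if h : (k : ℕ) < p then c (e.symm ⟨k, h⟩) j else 0, ?_⟩
  have hmv : ∀ y : Fin (p+1) → ℝ,
      (Matrix.of fun (j : Fin n) (k : Fin (p+1)) =>
        if h : (k : ℕ) < p then c (e.symm ⟨k, h⟩) j else 0).mulVec y
      = ∑ k : Fin (p+1), y k • (if h : (k : ℕ) < p then c (e.symm ⟨k, h⟩) else 0) := by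
    intro y
    funext j
    simp only [Matrix.mulVec, dotProduct, Matrix.of_apply, Finset.sum_apply,
      Pi.smul_apply, smul_eq_mul]
    refine Finset.sum_congr rfl fun k _ => ?_
    by_cases h : (k : ℕ) < p
    · simp [h, mul_comm]
    · simp [h]
  have hset : {x : Fin n → ℝ | A.mulVec x ≤ 0} = {x | ∀ i, (fun i => A i) i ⬝ᵥ x ≤ 0} := by
    ext z
    exact ⟨fun h i => h i, fun h i => h i⟩
  rw [hset, hc]
  ext x
  simp only [MinkowskiAux.coneOf, Set.mem_setOf_eq]
  constructor
  · rintro ⟨y, hy, hxy⟩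
    refine ⟨fun k => if h : (k : ℕ) < p then y (e.symm ⟨k, h⟩) else 0, ?_, ?_⟩
    · rw [Pi.le_def]
      intro k
      simp only [Pi.zero_apply]
      split
      · exact hy _
      · exact le_refl 0
    · rw [hmv]
      have key : ∀ k : Fin (p+1),
          (if h : (k : ℕ) < p then y (e.symm ⟨k, h⟩) else 0) •
            (if h : (k : ℕ) < p then c (e.symm ⟨k, h⟩) else (0 : Fin n → ℝ))
          = if h : (k : ℕ) < p then y (e.symm ⟨k, h⟩) • c (e.symm ⟨k, h⟩) else 0 := by
        intro k; split <;> simp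
      rw [Finset.sum_congr rfl fun k _ => key k, Fin.sum_univ_castSucc,
        dif_neg (by simp : ¬((Fin.last p : ℕ) < p)), add_zero, hxy,
        ← Equiv.sum_comp e.symm (fun j => y j • c j)]
      refine Finset.sum_congr rfl fun i _ => ?_
      rw [dif_pos (by simpa using i.isLt : ((i.castSucc : ℕ) < p))]
      have hi : (⟨(i.castSucc : ℕ), by simpa using i.isLt⟩ : Fin p) = i :=
        Fin.ext (by simp)
      rw [hi]
  · rintro ⟨y, hy, hxy⟩
    refine ⟨fun i => y ((e i).castSucc), fun i => hy _, ?_⟩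
    rw [hxy, hmv]
    have key : ∀ k : Fin (p+1),
        y k • (if h : (k : ℕ) < p then c (e.symm ⟨k, h⟩) else (0 : Fin n → ℝ))
        = if h : (k : ℕ) < p then y k • c (e.symm ⟨k, h⟩) else 0 := by
      intro k; split <;> simp
    rw [Finset.sum_congr rfl fun k _ => key k, Fin.sum_univ_castSucc,
      dif_neg (by simp : ¬((Fin.last p : ℕ) < p)), add_zero,
      ← Equiv.sum_comp e (fun k : Fin p => if h : ((Fin.castSucc k : ℕ) < p) then
        y (Fin.castSucc k) • c (e.symm ⟨(Fin.castSucc k : ℕ), h⟩) else 0)]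
    refine Finset.sum_congr rfl fun i _ => ?_
    rw [dif_pos (by simpa using (e i).isLt : ((Fin.castSucc (e i) : ℕ) < p))]
    have hi : (⟨((e i).castSucc : ℕ), by simpa using (e i).isLt⟩ : Fin p) = e i :=
      Fin.ext (by simp)
    rw [hi, Equiv.symm_apply_apply]
end

section
/- Let Q be a polytope in ℝ^n (the convex hull of a finite set of points) and let C be a finitely generated convex cone in ℝ^n (the set of all nonnegative linear combinations of a finite set of vectors). Then the Minkowski sum Q + C = {q + c : q ∈ Q, c ∈ C} is a polyhedron: there exist a positive integer m, an m × n real matrix A, and a vector b ∈ ℝ^m such that Q + C = {x ∈ ℝ^n : A x ≤ b}. -/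
open Pointwise

open Finset

/-- One-dimensional Fourier–Motzkin feasibility criterion. -/
lemma fm_exists {κ : Type} [Fintype κ] (α f b : κ → ℝ) :
    (∃ t : ℝ, ∀ j, α j * t + f j ≤ b j) ↔
      ((∀ j, α j = 0 → f j ≤ b j) ∧
        ∀ j₁ j₂, 0 < α j₁ → α j₂ < 0 →
          α j₁ * f j₂ - α j₂ * f j₁ ≤ α j₁ * b j₂ - α j₂ * b j₁) := by
  constructor
  · rintro ⟨t, ht⟩
    constructor
    · intro j hj
      have := ht j; rw [hj] at this; linarith
    · intro j₁ j₂ h1 h2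
      have e1 := ht j₁
      have e2 := ht j₂
      nlinarith [mul_le_mul_of_nonneg_left e2 h1.le,
        mul_le_mul_of_nonpos_left e1 h2.le]
  · rintro ⟨h0, hp⟩
    classical
    set U : Finset κ := Finset.univ.filter (fun j => 0 < α j) with hU
    set L : Finset κ := Finset.univ.filter (fun j => α j < 0) with hL
    by_cases hUe : U.Nonempty
    · -- t = min of upper bounds
      obtain ⟨j₀, hj₀mem, hj₀⟩ := U.exists_min_image (fun j => (b j - f j) / α j) hUe
      have hj₀pos : 0 < α j₀ := by simpa [hU] using hj₀mem
      refine ⟨(b j₀ - f j₀) / α j₀, fun j => ?_⟩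
      rcases lt_trichotomy (α j) 0 with hneg | hzero | hpos
      · -- lower bound constraint: use pair (j₀, j)
        have hpair := hp j₀ j hj₀pos hneg
        have key : α j₀ * ((b j₀ - f j₀) / α j₀) = b j₀ - f j₀ :=
          mul_div_cancel₀ _ hj₀pos.ne'
        nlinarith [mul_le_mul_of_nonpos_left
          (le_refl ((b j₀ - f j₀) / α j₀)) hneg.le]
      · have := h0 j hzero; rw [hzero]; linarith
      · have hmem : j ∈ U := by simp [hU, hpos]
        have := hj₀ j hmem
        have : α j * ((b j₀ - f j₀) / α j₀) ≤ α j * ((b j - f j) / α j) :=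
          mul_le_mul_of_nonneg_left this hpos.le
        rw [mul_div_cancel₀ _ hpos.ne'] at this
        linarith
    · -- no upper bounds
      by_cases hLe : L.Nonempty
      · obtain ⟨j₀, hj₀mem, hj₀⟩ := L.exists_max_image (fun j => (b j - f j) / α j) hLe
        refine ⟨(b j₀ - f j₀) / α j₀, fun j => ?_⟩
        rcases lt_trichotomy (α j) 0 with hneg | hzero | hpos
        · have hmem : j ∈ L := by simp [hL, hneg]
          have hle := hj₀ j hmem
          have : α j * ((b j₀ - f j₀) / α j₀) ≤ α j * ((b j - f j) / α j) :=
            mul_le_mul_of_nonpos_left hle hneg.le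
          rw [mul_div_cancel₀ _ hneg.ne] at this
          linarith
        · have := h0 j hzero; rw [hzero]; linarith
        · exact absurd (by simp [hU, hpos] : j ∈ U) (by simp [Finset.not_nonempty_iff_eq_empty.mp hUe])
      · refine ⟨0, fun j => ?_⟩
        have hz : α j = 0 := by
          by_contra hne
          rcases Ne.lt_or_gt hne with hlt | hgt
          · exact hLe ⟨j, by simp [hL, hlt]⟩
          · exact hUe ⟨j, by simp [hU, hgt]⟩
        have := h0 j hz; rw [hz]; linarith
open Finset

/-- A set of pairs cut out by finitely many linear inequalities. -/
def HP (d n : ℕ) (P : Set ((Fin d → ℝ) × (Fin n → ℝ))) : Prop :=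
  ∃ (κ : Type) (_ : Fintype κ) (a : κ → Fin d → ℝ) (c : κ → Fin n → ℝ) (b : κ → ℝ),
    P = {p | ∀ j, (∑ i, a j i * p.1 i) + (∑ i, c j i * p.2 i) ≤ b j}


/-- Eliminating one variable via Fourier–Motzkin. -/
lemma hp_step {d n : ℕ} (P : Set ((Fin (d + 1) → ℝ) × (Fin n → ℝ))) (hP : HP (d + 1) n P) :
    HP d n {p | ∃ t : ℝ, (Fin.cons t p.1, p.2) ∈ P} := by
  classical
  obtain ⟨κ, _, a, c, b, rfl⟩ := hP
  -- f j p = ∑ i, a j i.succ * p.1 i + ∑ i, c j i * p.2 i,  α j = a j 0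
  refine ⟨κ ⊕ κ × κ, inferInstance,
    Sum.elim (fun j => if a j 0 = 0 then (fun i => a j i.succ) else 0)
      (fun jj => if 0 < a jj.1 0 ∧ a jj.2 0 < 0 then
        (fun i => a jj.1 0 * a jj.2 i.succ - a jj.2 0 * a jj.1 i.succ) else 0),
    Sum.elim (fun j => if a j 0 = 0 then c j else 0)
      (fun jj => if 0 < a jj.1 0 ∧ a jj.2 0 < 0 then
        (fun i => a jj.1 0 * c jj.2 i - a jj.2 0 * c jj.1 i) else 0),
    Sum.elim (fun j => if a j 0 = 0 then b j else 0)
      (fun jj => if 0 < a jj.1 0 ∧ a jj.2 0 < 0 then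
        a jj.1 0 * b jj.2 - a jj.2 0 * b jj.1 else 0), ?_⟩
  ext p
  simp only [Set.mem_setOf_eq]
  have hsum : ∀ (t : ℝ) (j : κ),
      (∑ i, a j i * (Fin.cons t p.1 : Fin (d+1) → ℝ) i) =
        a j 0 * t + ∑ i : Fin d, a j i.succ * p.1 i := by
    intro t j
    rw [Fin.sum_univ_succ]
    simp
  constructor
  · rintro ⟨t, ht⟩
    have hfm := (fm_exists (fun j => a j 0)
      (fun j => (∑ i : Fin d, a j i.succ * p.1 i) + ∑ i, c j i * p.2 i) b).mp
      ⟨t, fun j => by have := ht j; rw [hsum t j] at this; linarith⟩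
    rintro (j | ⟨j₁, j₂⟩)
    · by_cases h0 : a j 0 = 0
      · simpa [h0] using hfm.1 j h0
      · simp [h0]
    · by_cases hc : 0 < a j₁ 0 ∧ a j₂ 0 < 0
      · have := hfm.2 j₁ j₂ hc.1 hc.2
        simp only [Sum.elim_inr, if_pos hc]
        rw [Finset.sum_congr rfl (fun i _ => sub_mul (a j₁ 0 * a j₂ i.succ) _ (p.1 i)),
          Finset.sum_congr rfl (fun i _ => sub_mul (a j₁ 0 * c j₂ i) _ (p.2 i))]
        rw [Finset.sum_sub_distrib, Finset.sum_sub_distrib]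
        simp only [mul_assoc]
        rw [← Finset.mul_sum, ← Finset.mul_sum, ← Finset.mul_sum, ← Finset.mul_sum]
        linarith
      · simp [hc]
  · intro hc
    have hfm := (fm_exists (fun j => a j 0)
      (fun j => (∑ i : Fin d, a j i.succ * p.1 i) + ∑ i, c j i * p.2 i) b).mpr ?_
    · obtain ⟨t, ht⟩ := hfm
      exact ⟨t, fun j => by rw [hsum t j]; have := ht j; linarith⟩
    constructor
    · intro j h0
      have := hc (Sum.inl j)
      simpa [h0] using this
    · intro j₁ j₂ h1 h2
      have := hc (Sum.inr (j₁, j₂))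
      simp only [Sum.elim_inr, if_pos (And.intro h1 h2)] at this
      rw [Finset.sum_congr rfl (fun i _ => sub_mul (a j₁ 0 * a j₂ i.succ) _ (p.1 i)),
        Finset.sum_congr rfl (fun i _ => sub_mul (a j₁ 0 * c j₂ i) _ (p.2 i))] at this
      rw [Finset.sum_sub_distrib, Finset.sum_sub_distrib] at this
      simp only [mul_assoc] at this
      rw [← Finset.mul_sum, ← Finset.mul_sum, ← Finset.mul_sum, ← Finset.mul_sum] at this
      linarith

/-- Eliminating all of the first block of variables. -/
lemma hp_proj : ∀ (d : ℕ) {n : ℕ} (P : Set ((Fin d → ℝ) × (Fin n → ℝ))), HP d n P →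
    ∃ (κ : Type) (_ : Fintype κ) (c : κ → Fin n → ℝ) (b : κ → ℝ),
      {y | ∃ x, (x, y) ∈ P} = {y | ∀ j, ∑ i, c j i * y i ≤ b j} := by
  intro d
  induction d with
  | zero =>
    rintro n P ⟨κ, _, a, c, b, rfl⟩
    refine ⟨κ, inferInstance, c, b, ?_⟩
    ext y
    simp only [Set.mem_setOf_eq]
    constructor
    · rintro ⟨x, hx⟩ j
      have := hx j
      simpa using this
    · intro hy
      exact ⟨fun i => i.elim0, fun j => by simpa using hy j⟩
  | succ d ih =>
    intro n P hP
    obtain ⟨κ, _, c, b, hQ⟩ := ih _ (hp_step P hP)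
    refine ⟨κ, ‹_›, c, b, ?_⟩
    rw [← hQ]
    ext y
    simp only [Set.mem_setOf_eq]
    constructor
    · rintro ⟨x, hx⟩
      exact ⟨Fin.tail x, x 0, by rwa [Fin.cons_self_tail]⟩
    · rintro ⟨x, t, hx⟩
      exact ⟨Fin.cons t x, hx⟩

private lemma mem_hull_iff {n : ℕ} (S : Set (Fin n → ℝ)) (hS : S.Finite) (q : Fin n → ℝ) :
    q ∈ convexHull ℝ S ↔ ∃ μ : Fin hS.toFinset.card → ℝ, (∀ i, 0 ≤ μ i) ∧
      (∑ i, μ i = 1) ∧ q = ∑ i, μ i • (hS.toFinset.equivFin.symm i : Fin n → ℝ) := by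
  classical
  set s := hS.toFinset with hs
  set e := s.equivFin with he
  set v : Fin s.card → (Fin n → ℝ) := fun i => (e.symm i : Fin n → ℝ) with hv
  constructor
  · intro hq
    rw [← hS.coe_toFinset, Finset.mem_convexHull'] at hq
    obtain ⟨wf, hw0, hw1, hwq⟩ := hq
    refine ⟨fun i => wf (v i), fun i => hw0 _ (by simp [hv, hs]), ?_, ?_⟩
    · rw [← hw1, ← Finset.sum_coe_sort s wf]
      exact (Equiv.sum_comp e.symm (fun y : s => wf ↑y)).symm ▸
        (Equiv.sum_comp e.symm (fun y : s => wf ↑y))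
    · rw [← hwq, ← Finset.sum_coe_sort s (fun y => wf y • y)]
      exact (Equiv.sum_comp e.symm (fun y : s => wf ↑y • (y : Fin n → ℝ))).symm
  · rintro ⟨μ, hμ0, hμ1, rfl⟩
    exact mem_convexHull_of_exists_fintype μ v hμ0 hμ1
      (fun i => hS.mem_toFinset.mp (e.symm i).2) rfl

/-- The Minkowski sum of a polytope and a finitely generated convex cone is a
polyhedron. -/
theorem polytope_add_cone_is_polyhedron (n : ℕ) (S : Set (Fin n → ℝ))
    (hS : S.Finite) (h : ℕ) (w : Fin h → (Fin n → ℝ)) :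
    ∃ (m : ℕ) (_ : 0 < m) (A : Matrix (Fin m) (Fin n) ℝ) (b : Fin m → ℝ),
      convexHull ℝ S +
        {x : Fin n → ℝ | ∃ l : Fin h → ℝ, (∀ i, 0 ≤ l i) ∧ x = ∑ i, l i • w i}
        = {x : Fin n → ℝ | A.mulVec x ≤ b} := by
  classical
  set s := hS.toFinset with hs
  set k := s.card with hk
  set v : Fin k → (Fin n → ℝ) := fun i => (s.equivFin.symm i : Fin n → ℝ) with hv
  set g : Fin (k + h) → (Fin n → ℝ) := Fin.append v w with hg
  set P : Set ((Fin (k + h) → ℝ) × (Fin n → ℝ)) :=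
    {p | (∀ i, 0 ≤ p.1 i) ∧ (∑ i : Fin k, p.1 (Fin.castAdd h i) = 1) ∧
      (∀ r, p.2 r = ∑ i, p.1 i * g i r)} with hPdef
  -- P is an H-polyhedron
  have hHP : HP (k + h) n P := by
    refine ⟨Fin (k + h) ⊕ ((Unit ⊕ Unit) ⊕ (Fin n ⊕ Fin n)), inferInstance,
      Sum.elim (fun i => fun i' => if i' = i then -1 else 0)
        (Sum.elim
          (Sum.elim (fun _ => fun i' => if (i' : ℕ) < k then 1 else 0)
            (fun _ => fun i' => if (i' : ℕ) < k then -1 else 0))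
          (Sum.elim (fun r => fun i' => -(g i' r)) (fun r => fun i' => g i' r))),
      Sum.elim (fun _ => 0)
        (Sum.elim (fun _ => 0)
          (Sum.elim (fun r => fun r' => if r' = r then 1 else 0)
            (fun r => fun r' => if r' = r then -1 else 0))),
      Sum.elim (fun _ => 0) (Sum.elim (Sum.elim (fun _ => 1) (fun _ => -1)) (fun _ => 0)),
      ?_⟩
    ext p
    have F1 : ∀ i : Fin (k + h),
        (∑ i', (if i' = i then (-1 : ℝ) else 0) * p.1 i') = -p.1 i := by
      intro i
      rw [Finset.sum_eq_single i (fun i' _ hne => by simp [hne]) (by simp)]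
      simp
    have F2 : ∀ cst : ℝ,
        (∑ i', (if ((i' : Fin (k + h)) : ℕ) < k then cst else 0) * p.1 i')
          = cst * ∑ i : Fin k, p.1 (Fin.castAdd h i) := by
      intro cst
      rw [Fin.sum_univ_add]
      have h2 : ∀ i : Fin h,
          (if ((Fin.natAdd k i : Fin (k + h)) : ℕ) < k then cst else 0) *
            p.1 (Fin.natAdd k i) = 0 := by
        intro i; simp [Fin.natAdd]
      rw [Finset.sum_congr rfl (fun i _ => h2 i), Finset.sum_const_zero, add_zero,
        Finset.mul_sum]
      refine Finset.sum_congr rfl fun i _ => ?_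
      have : ((Fin.castAdd h i : Fin (k + h)) : ℕ) < k := by
        simpa using i.isLt
      rw [if_pos this]
    have F3 : ∀ (cst : ℝ) (r : Fin n),
        (∑ r', (if r' = r then cst else 0) * p.2 r') = cst * p.2 r := by
      intro cst r
      rw [Finset.sum_eq_single r (fun r' _ hne => by simp [hne]) (by simp)]
      simp
    have F4 : ∀ r : Fin n,
        (∑ i', -(g i' r) * p.1 i') = -∑ i', p.1 i' * g i' r := by
      intro r
      rw [← Finset.sum_neg_distrib]
      exact Finset.sum_congr rfl fun i' _ => by ring
    have F5 : ∀ r : Fin n,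
        (∑ i', g i' r * p.1 i') = ∑ i', p.1 i' * g i' r :=
      fun r => Finset.sum_congr rfl fun i' _ => by ring
    simp only [hPdef, Set.mem_setOf_eq]
    constructor
    · rintro ⟨h1, h2, h3⟩ j
      rcases j with i | (u | u) | r | r
      · simpa [F1] using h1 i
      · simp only [Sum.elim_inl, Sum.elim_inr, F2, h2, Pi.zero_apply, zero_mul,
          Finset.sum_const_zero, add_zero]
        norm_num
      · simp only [Sum.elim_inl, Sum.elim_inr, F2, h2, Pi.zero_apply, zero_mul,
          Finset.sum_const_zero, add_zero]
        norm_num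
      · simp only [Sum.elim_inl, Sum.elim_inr, F3, F4, ← h3 r]
        norm_num
      · simp only [Sum.elim_inl, Sum.elim_inr, F3, F5, ← h3 r]
        norm_num
    · intro hj
      refine ⟨fun i => ?_, ?_, fun r => ?_⟩
      · have := hj (Sum.inl i)
        simp only [Sum.elim_inl, F1, Pi.zero_apply, zero_mul,
          Finset.sum_const_zero, add_zero] at this
        linarith
      · have ht := hj (Sum.inr (Sum.inl (Sum.inl ())))
        have hf := hj (Sum.inr (Sum.inl (Sum.inr ())))
        simp only [Sum.elim_inl, Sum.elim_inr, F2, Pi.zero_apply, zero_mul,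
          Finset.sum_const_zero, add_zero] at ht hf
        linarith
      · have ht := hj (Sum.inr (Sum.inr (Sum.inl r)))
        have hf := hj (Sum.inr (Sum.inr (Sum.inr r)))
        simp only [Sum.elim_inl, Sum.elim_inr, F3, F4, F5] at ht hf
        linarith
  -- the projection of P is the Minkowski sum
  have hproj : {y | ∃ x, (x, y) ∈ P} =
      convexHull ℝ S +
        {x : Fin n → ℝ | ∃ l : Fin h → ℝ, (∀ i, 0 ≤ l i) ∧ x = ∑ i, l i • w i} := by
    ext y
    simp only [Set.mem_setOf_eq, Set.mem_add]
    constructor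
    · rintro ⟨z, hz⟩
      obtain ⟨hz1, hz2, hz3⟩ : (∀ i, 0 ≤ z i) ∧ (∑ i : Fin k, z (Fin.castAdd h i) = 1)
          ∧ (∀ r, y r = ∑ i, z i * g i r) := hz
      refine ⟨∑ i : Fin k, z (Fin.castAdd h i) • v i, ?_,
        ∑ i : Fin h, z (Fin.natAdd k i) • w i, ⟨fun i => z (Fin.natAdd k i),
          fun i => hz1 _, rfl⟩, ?_⟩
      · exact (mem_hull_iff S hS _).mpr ⟨fun i => z (Fin.castAdd h i),
          fun i => hz1 _, hz2, rfl⟩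
      · funext r
        have h3 : y r = ∑ i : Fin k, z (Fin.castAdd h i) * g (Fin.castAdd h i) r +
            ∑ i : Fin h, z (Fin.natAdd k i) * g (Fin.natAdd k i) r := by
          rw [hz3 r, Fin.sum_univ_add]
        simp only [Pi.add_apply, Finset.sum_apply, Pi.smul_apply, smul_eq_mul]
        rw [h3]
        congr 1 <;> exact Finset.sum_congr rfl fun i _ => by
          simp [hg, Fin.append_left, Fin.append_right]
    · rintro ⟨q, hq, cc, ⟨l, hl0, rfl⟩, rfl⟩
      obtain ⟨μ, hμ0, hμ1, rfl⟩ := (mem_hull_iff S hS q).mp hq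
      refine ⟨Fin.append μ l, fun i => ?_, ?_, fun r => ?_⟩
      · show 0 ≤ Fin.append μ l i
        induction i using Fin.addCases with
        | left i => rw [Fin.append_left]; exact hμ0 i
        | right i => rw [Fin.append_right]; exact hl0 i
      · show ∑ i : Fin k, Fin.append μ l (Fin.castAdd h i) = 1
        simp only [Fin.append_left]; exact hμ1
      · show ((∑ i, μ i • v i) + ∑ i, l i • w i) r
            = ∑ i : Fin (k + h), Fin.append μ l i * g i r
        rw [Fin.sum_univ_add]
        simp only [Pi.add_apply, Finset.sum_apply, Pi.smul_apply, smul_eq_mul]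
        congr 1 <;> exact Finset.sum_congr rfl fun i _ => by
          simp [hg, Fin.append_left, Fin.append_right, hv] <;> exact Or.inl (Fin.append_right μ l i).symm
  -- project and convert to matrix form
  obtain ⟨κ, _, c, b, hPoly⟩ := hp_proj (k + h) P hHP
  rw [hproj] at hPoly
  refine ⟨Fintype.card κ + 1, Nat.succ_pos _,
    Matrix.of (Fin.snoc (fun j => c ((Fintype.equivFin κ).symm j)) 0),
    Fin.snoc (fun j => b ((Fintype.equivFin κ).symm j)) 0, ?_⟩
  rw [hPoly]
  ext x
  simp only [Set.mem_setOf_eq, Pi.le_def, Matrix.mulVec, dotProduct,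
    Matrix.of_apply]
  constructor
  · intro hx j
    induction j using Fin.lastCases with
    | last => simp [Fin.snoc_last]
    | cast j =>
      rw [Fin.snoc_castSucc]
      have := hx ((Fintype.equivFin κ).symm j)
      simpa [Fin.snoc_castSucc] using this
  · intro hx j
    have := hx (Fin.castSucc (Fintype.equivFin κ j))
    simpa [Fin.snoc_castSucc] using this
end

section
/- Let A be an m × n real matrix and b ∈ ℝ^m, and let P = {x ∈ ℝ^n : A x ≤ b} be a polyhedron. Then there exist a finite set S ⊆ ℝ^n and a finite list of vectors w_1, …, w_r ∈ ℝ^n such that P = Q + C, where Q is the convex hull of S and C = {λ_1 w_1 + ⋯ + λ_r w_r : λ_1, …, λ_r ≥ 0} is the finitely generated convex cone generated by w_1, …, w_r; here Q + C = {q + c : q ∈ Q, c ∈ C}. -/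
open Pointwise Finset Matrix

variable {n : ℕ}

def cne {ι : Type} [Fintype ι] (w : ι → (Fin n → ℝ)) : Set (Fin n → ℝ) :=
  {x | ∃ l : ι → ℝ, (∀ i, 0 ≤ l i) ∧ x = ∑ i, l i • w i}

lemma mem_cne_self {ι : Type} [Fintype ι] [DecidableEq ι] (w : ι → (Fin n → ℝ)) (i : ι) :
    w i ∈ cne w := by
  refine ⟨fun j => if j = i then 1 else 0, fun j => by positivity, ?_⟩
  simp [ite_smul]

lemma cne_zero_mem {ι : Type} [Fintype ι] (w : ι → (Fin n → ℝ)) : (0 : Fin n → ℝ) ∈ cne w :=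
  ⟨0, fun _ => le_rfl, by simp⟩

lemma cne_add_mem {ι : Type} [Fintype ι] {w : ι → (Fin n → ℝ)} {x y : Fin n → ℝ}
    (hx : x ∈ cne w) (hy : y ∈ cne w) : x + y ∈ cne w := by
  obtain ⟨l, hl, rfl⟩ := hx; obtain ⟨l', hl', rfl⟩ := hy
  exact ⟨l + l', fun i => add_nonneg (hl i) (hl' i), by simp [add_smul, Finset.sum_add_distrib]⟩

lemma cne_smul_mem {ι : Type} [Fintype ι] {w : ι → (Fin n → ℝ)} {c : ℝ} (hc : 0 ≤ c)
    {x : Fin n → ℝ} (hx : x ∈ cne w) : c • x ∈ cne w := by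
  obtain ⟨l, hl, rfl⟩ := hx
  exact ⟨c • l, fun i => mul_nonneg hc (hl i), by simp [Finset.smul_sum, smul_smul]⟩

lemma cne_subset {ι : Type} [Fintype ι] {w : ι → (Fin n → ℝ)} {C : Set (Fin n → ℝ)}
    (h0 : (0 : Fin n → ℝ) ∈ C) (hadd : ∀ x ∈ C, ∀ y ∈ C, x + y ∈ C)
    (hsmul : ∀ (c : ℝ), 0 ≤ c → ∀ x ∈ C, c • x ∈ C) (hw : ∀ i, w i ∈ C) :
    cne w ⊆ C := by
  rintro x ⟨l, hl, rfl⟩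
  exact Finset.sum_induction _ (· ∈ C) (fun a b ha hb => hadd a ha b hb) h0
    (fun i _ => hsmul _ (hl i) _ (hw i))

lemma dot_sum {ι : Type} [Fintype ι] (a : Fin n → ℝ) (l : ι → ℝ) (w : ι → (Fin n → ℝ)) :
    a ⬝ᵥ (∑ i, l i • w i) = ∑ i, l i * (a ⬝ᵥ w i) := by
  simp [dotProduct, Finset.mul_sum, Finset.sum_mul]
  rw [Finset.sum_comm]
  congr 1; ext i; congr 1; ext j; ring

lemma cne_reindex {ι ι' : Type} [Fintype ι] [Fintype ι'] (w : ι → (Fin n → ℝ)) (e : ι' ≃ ι) :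
    cne (w ∘ e) = cne w := by
  ext x
  constructor
  · rintro ⟨l, hl, rfl⟩
    exact ⟨l ∘ e.symm, fun i => hl _, by
      rw [← Equiv.sum_comp e (fun i => (l ∘ e.symm) i • w i)]; simp⟩
  · rintro ⟨l, hl, rfl⟩
    exact ⟨l ∘ e, fun i => hl _, by
      rw [← Equiv.sum_comp e (fun i => l i • w i)]; simp⟩

lemma cne_inter_halfspace {ι : Type} [Fintype ι] [DecidableEq ι] (w : ι → (Fin n → ℝ))
    (a : Fin n → ℝ) :
    ∃ (ι' : Type) (_ : Fintype ι') (_ : DecidableEq ι') (w' : ι' → (Fin n → ℝ)),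
      cne w' = cne w ∩ {x | a ⬝ᵥ x ≤ 0} := by
  classical
  set g : ι → ℝ := fun k => a ⬝ᵥ w k with hg
  set W : (ι ⊕ ι × ι) → (Fin n → ℝ) := Sum.elim (fun k => if g k ≤ 0 then w k else 0)
    (fun pq => if 0 < g pq.1 ∧ g pq.2 < 0 then g pq.1 • w pq.2 - g pq.2 • w pq.1 else 0)
    with hW
  refine ⟨ι ⊕ ι × ι, inferInstance, inferInstance, W, Set.Subset.antisymm ?_ ?_⟩
  · -- easy direction
    refine cne_subset ?_ ?_ ?_ ?_
    · exact ⟨cne_zero_mem w, by simp⟩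
    · rintro x ⟨hx1, hx2⟩ y ⟨hy1, hy2⟩
      exact ⟨cne_add_mem hx1 hy1, by simp only [Set.mem_setOf_eq, dotProduct_add] at *; linarith⟩
    · rintro c hc x ⟨hx1, hx2⟩
      refine ⟨cne_smul_mem hc hx1, ?_⟩
      simp only [Set.mem_setOf_eq, dotProduct_smul, smul_eq_mul] at *
      exact mul_nonpos_of_nonneg_of_nonpos hc hx2
    · rintro (k | ⟨p, q⟩)
      · by_cases h : g k ≤ 0
        · exact ⟨by simpa [hW, h] using mem_cne_self w k, by simp only [hW, Set.mem_setOf_eq, Sum.elim_inl, if_pos h]; exact h⟩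
        · refine ⟨by simpa [hW, h] using cne_zero_mem w, by simp [hW, h]⟩
      · by_cases h : 0 < g p ∧ g q < 0
        · refine ⟨?_, ?_⟩
          · have : W (Sum.inr (p, q)) = g p • w q + (-(g q)) • w p := by
              simp [hW, h, sub_eq_add_neg, neg_smul]
            rw [this]
            exact cne_add_mem (cne_smul_mem h.1.le (mem_cne_self w q))
              (cne_smul_mem (by linarith [h.2]) (mem_cne_self w p))
          · simp only [hW, Set.mem_setOf_eq, Sum.elim_inr, if_pos h, dotProduct_sub,
              dotProduct_smul, smul_eq_mul]
            have e1 : a ⬝ᵥ w q = g q := rfl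
            have e2 : a ⬝ᵥ w p = g p := rfl
            rw [e1, e2]
            nlinarith [mul_comm (g p) (g q)]
        · exact ⟨by simpa [hW, h] using cne_zero_mem w, by simp [hW, h]⟩
  · -- hard direction
    rintro x ⟨⟨l, hl, rfl⟩, hx⟩
    rw [Set.mem_setOf_eq, dot_sum] at hx
    set α := ∑ k, if 0 < g k then l k * g k else 0 with hαdef
    set β := ∑ k, if g k < 0 then l k * (-(g k)) else 0 with hβdef
    have hα : 0 ≤ α := Finset.sum_nonneg fun k _ => by
      split_ifs with h
      · exact mul_nonneg (hl k) h.le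
      · exact le_refl 0
    have hβ : 0 ≤ β := Finset.sum_nonneg fun k _ => by
      split_ifs with h
      · exact mul_nonneg (hl k) (by linarith)
      · exact le_refl 0
    have hxαβ : ∑ i, l i * (a ⬝ᵥ w i) = α - β := by
      rw [hαdef, hβdef, ← Finset.sum_sub_distrib]
      refine Finset.sum_congr rfl fun k _ => ?_
      have e1 : a ⬝ᵥ w k = g k := rfl
      rw [e1]
      rcases lt_trichotomy (g k) 0 with h | h | h
      · rw [if_neg (by linarith), if_pos h]; ring
      · rw [if_neg (by rw [h]; exact lt_irrefl 0), if_neg (by rw [h]; exact lt_irrefl 0), h]; ring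
      · rw [if_pos h, if_neg (by linarith)]; ring
    have hαβ : α ≤ β := by rw [hxαβ] at hx; linarith
    by_cases hα0 : α = 0
    · -- no positive mass
      have hz : ∀ k ∈ Finset.univ, (if 0 < g k then l k * g k else 0) = 0 := by
        rw [← Finset.sum_eq_zero_iff_of_nonneg]
        · exact hα0.symm ▸ hαdef.symm
        · intro k _
          split_ifs with h
          · exact mul_nonneg (hl k) h.le
          · exact le_refl 0
      refine ⟨Sum.elim l 0, ?_, ?_⟩
      · rintro (k | pq)
        · exact hl k
        · exact le_refl 0
      · rw [Fintype.sum_sum_type]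
        simp only [hW, Sum.elim_inl, Sum.elim_inr, Pi.zero_apply, zero_smul,
          Finset.sum_const_zero, add_zero]
        refine Finset.sum_congr rfl fun k _ => ?_
        by_cases h : g k ≤ 0
        · rw [if_pos h]
        · have := hz k (Finset.mem_univ k)
          rw [if_pos (not_le.1 h)] at this
          have hgk : 0 < g k := not_le.1 h
          have hlk : l k = 0 := by
            rcases mul_eq_zero.1 this with h' | h'
            · exact h'
            · linarith
          simp [hlk]
    · have hαpos : 0 < α := lt_of_le_of_ne hα (Ne.symm hα0)
      have hβpos : 0 < β := lt_of_lt_of_le hαpos hαβ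
      have hβne : β ≠ 0 := ne_of_gt hβpos
      refine ⟨Sum.elim (fun k => if g k < 0 then l k * (1 - α / β) else l k)
        (fun pq => if 0 < g pq.1 ∧ g pq.2 < 0 then l pq.1 * l pq.2 / β else 0), ?_, ?_⟩
      · rintro (k | ⟨p, q⟩)
        · dsimp only [Sum.elim_inl]
          split_ifs with h
          · refine mul_nonneg (hl k) ?_
            have : α / β ≤ 1 := (div_le_one hβpos).2 hαβ
            linarith
          · exact hl k
        · dsimp only [Sum.elim_inr]
          split_ifs with h
          · exact div_nonneg (mul_nonneg (hl p) (hl q)) hβpos.le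
          · exact le_refl 0
      · rw [Fintype.sum_sum_type]
        have pairEq : ∀ pq : ι × ι,
            (if 0 < g pq.1 ∧ g pq.2 < 0 then l pq.1 * l pq.2 / β else 0) • W (Sum.inr pq)
            = ((if 0 < g pq.1 then l pq.1 * g pq.1 else 0) * (if g pq.2 < 0 then l pq.2 else 0) / β) • w pq.2
              + ((if 0 < g pq.1 then l pq.1 else 0) * (if g pq.2 < 0 then l pq.2 * (-(g pq.2)) else 0) / β) • w pq.1 := by
          rintro ⟨p, q⟩
          by_cases hp : 0 < g p <;> by_cases hq : g q < 0
          · rw [hW]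
            simp only [Sum.elim_inr]
            rw [if_pos ⟨hp, hq⟩, if_pos ⟨hp, hq⟩, if_pos hp, if_pos hp, if_pos hq, if_pos hq]
            rw [smul_sub, smul_smul, smul_smul, sub_eq_add_neg, ← neg_smul]
            congr 1 <;> ring
          · rw [hW]
            simp only [Sum.elim_inr]
            rw [if_neg (by tauto), if_neg hq, if_neg hq]
            simp
          · rw [hW]
            simp only [Sum.elim_inr]
            rw [if_neg (by tauto), if_neg hp, if_neg hp]
            simp
          · rw [hW]
            simp only [Sum.elim_inr]
            rw [if_neg (by tauto), if_neg hq, if_neg hq]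
            simp
        have hB1 : (∑ pq : ι × ι, ((if 0 < g pq.1 then l pq.1 * g pq.1 else 0) * (if g pq.2 < 0 then l pq.2 else 0) / β) • w pq.2)
            = ∑ q, (α * (if g q < 0 then l q else 0) / β) • w q := by
          rw [Fintype.sum_prod_type]
          dsimp only
          rw [Finset.sum_comm]
          refine Finset.sum_congr rfl fun q _ => ?_
          rw [← Finset.sum_smul]
          congr 1
          rw [← Finset.sum_div, ← Finset.sum_mul Finset.univ (fun i => if 0 < g i then l i * g i else 0) (if g q < 0 then l q else 0), ← hαdef]
        have hB2 : (∑ pq : ι × ι, ((if 0 < g pq.1 then l pq.1 else 0) * (if g pq.2 < 0 then l pq.2 * (-(g pq.2)) else 0) / β) • w pq.1)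
            = ∑ p, (if 0 < g p then l p else 0) • w p := by
          rw [Fintype.sum_prod_type]
          dsimp only
          refine Finset.sum_congr rfl fun p _ => ?_
          rw [← Finset.sum_smul]
          congr 1
          rw [← Finset.sum_div, ← Finset.mul_sum Finset.univ (fun i => if g i < 0 then l i * -g i else 0) (if 0 < g p then l p else 0), ← hβdef]
          field_simp
        simp only [Sum.elim_inl, Sum.elim_inr]
        rw [Finset.sum_congr rfl (fun pq _ => pairEq pq), Finset.sum_add_distrib, hB1, hB2]
        · rw [← Finset.sum_add_distrib, ← Finset.sum_add_distrib]
          refine Finset.sum_congr rfl fun k _ => ?_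
          rw [hW]
          simp only [Sum.elim_inl]
          rcases lt_trichotomy (g k) 0 with h | h | h
          · rw [if_pos h, if_pos h.le, if_pos h, if_neg (by linarith)]
            rw [zero_smul, add_zero, ← add_smul]
            congr 1
            field_simp
            ring
          · rw [if_neg (by rw [h]; exact lt_irrefl 0), if_pos h.le, if_neg (by rw [h]; exact lt_irrefl 0),
              if_neg (by rw [h]; exact lt_irrefl 0)]
            simp
          · rw [if_neg (by linarith), if_neg (by linarith), if_neg (by linarith), if_pos h]
            simp


/-- ℝ^n is a finitely generated cone. -/
lemma univ_eq_cne :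
    (Set.univ : Set (Fin n → ℝ)) = cne (Sum.elim (fun j : Fin n => Pi.single j (1:ℝ))
      (fun j : Fin n => -Pi.single j (1:ℝ))) := by
  refine Set.eq_of_subset_of_subset ?_ (Set.subset_univ _)
  intro x _
  refine ⟨Sum.elim (fun j => max (x j) 0) (fun j => max (-(x j)) 0),
    by rintro (j | j) <;> simp [le_max_right], ?_⟩
  rw [Fintype.sum_sum_type]
  simp only [Sum.elim_inl, Sum.elim_inr]
  ext j
  simp only [Pi.add_apply, Finset.sum_apply, Pi.smul_apply, Pi.neg_apply, smul_eq_mul,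
    Pi.single_apply, mul_ite, mul_one, mul_zero, mul_neg]
  rw [Finset.sum_ite_eq Finset.univ j (fun i => max (x i) 0),
    Finset.sum_congr rfl (fun i _ => (by split_ifs <;> simp : -(if j = i then max (-(x i)) 0 else 0) = (if j = i then -max (-(x i)) 0 else 0))),
    Finset.sum_ite_eq Finset.univ j (fun i => -max (-(x i)) 0)]
  simp only [Finset.mem_univ, if_true]
  rcases le_total (x j) 0 with h | h
  · rw [max_eq_right h, max_eq_left (neg_nonneg.2 h)]
    ring
  · rw [max_eq_left h, max_eq_right (neg_nonpos.2 h)]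
    ring

/-- every polyhedral cone is finitely generated -/
lemma polyCone_eq_cne (m : ℕ) (g : Fin m → (Fin n → ℝ)) :
    ∃ (ι : Type) (_ : Fintype ι) (_ : DecidableEq ι) (w : ι → (Fin n → ℝ)),
      {x | ∀ i, g i ⬝ᵥ x ≤ 0} = cne w := by
  induction m with
  | zero =>
    refine ⟨(Fin n) ⊕ (Fin n), inferInstance, inferInstance,
      Sum.elim (fun j : Fin n => Pi.single j (1:ℝ)) (fun j : Fin n => -Pi.single j (1:ℝ)), ?_⟩
    rw [← univ_eq_cne]
    simp [Set.eq_univ_iff_forall]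
  | succ m ih =>
    obtain ⟨ι, _, _, w, hw⟩ := ih (g ∘ Fin.succ)
    obtain ⟨ι', _, _, w', hw'⟩ := cne_inter_halfspace w (g 0)
    refine ⟨ι', ‹_›, ‹_›, w', ?_⟩
    rw [hw', ← hw]
    ext x
    simp only [Set.mem_setOf_eq, Set.mem_inter_iff, Fin.forall_fin_succ, Function.comp_apply]
    tauto

lemma dot_snoc (u v : Fin n → ℝ) (c d : ℝ) :
    (Fin.snoc u c : Fin (n+1) → ℝ) ⬝ᵥ (Fin.snoc v d) = u ⬝ᵥ v + c * d := by
  simp [dotProduct, Fin.sum_univ_castSucc]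

/-- Every polyhedron is the Minkowski sum of a polytope and a finitely generated
convex cone. -/
theorem polyhedron_eq_polytope_add_cone (m n : ℕ) (A : Matrix (Fin m) (Fin n) ℝ)
    (b : Fin m → ℝ) :
    ∃ (S : Set (Fin n → ℝ)) (_ : S.Finite) (r : ℕ) (w : Fin r → (Fin n → ℝ)),
      {x : Fin n → ℝ | A.mulVec x ≤ b}
        = convexHull ℝ S +
          {x : Fin n → ℝ | ∃ l : Fin r → ℝ, (∀ i, 0 ≤ l i) ∧ x = ∑ i, l i • w i} := by
  classical
  -- homogenized constraints
  set g : Fin (m+1) → (Fin (n+1) → ℝ) :=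
    Fin.snoc (fun i => Fin.snoc (fun j => A i j) (-(b i))) (Fin.snoc 0 (-1)) with hgdef
  obtain ⟨ι, _, _, v, hv⟩ := polyCone_eq_cne (m+1) g
  set t : ι → ℝ := fun k => v k (Fin.last n) with htdef
  set u : ι → (Fin n → ℝ) := fun k => Fin.init (v k) with hudef
  have hvsnoc : ∀ k, v k = Fin.snoc (u k) (t k) := fun k => (Fin.snoc_init_self (v k)).symm
  have hgen : ∀ k, ∀ i, g i ⬝ᵥ v k ≤ 0 := by
    intro k
    have : v k ∈ cne v := mem_cne_self v k
    rw [← hv] at this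
    exact this
  have hconstr : ∀ k i, (fun j => A i j) ⬝ᵥ u k ≤ b i * t k := by
    intro k i
    have h := hgen k (Fin.castSucc i)
    rw [hgdef] at h
    rw [Fin.snoc_castSucc, hvsnoc k, dot_snoc] at h
    linarith
  have ht : ∀ k, 0 ≤ t k := by
    intro k
    have h := hgen k (Fin.last m)
    rw [hgdef] at h
    rw [Fin.snoc_last, hvsnoc k, dot_snoc, zero_dotProduct] at h
    linarith
  set wι : ι → (Fin n → ℝ) := fun k => if t k = 0 then u k else 0 with hwι
  refine ⟨(fun k => (t k)⁻¹ • u k) '' {k | t k ≠ 0}, (Set.toFinite _).image _,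
    Fintype.card ι, wι ∘ (Fintype.equivFin ι).symm, ?_⟩
  have hcone : {x : Fin n → ℝ | ∃ l : Fin (Fintype.card ι) → ℝ, (∀ i, 0 ≤ l i) ∧
      x = ∑ i, l i • (wι ∘ (Fintype.equivFin ι).symm) i} = cne wι :=
    cne_reindex wι (Fintype.equivFin ι).symm
  rw [hcone]
  apply Set.Subset.antisymm
  · -- P ⊆ conv S + cone
    intro x hx
    have hx' : (Fin.snoc x 1 : Fin (n+1) → ℝ) ∈ cne v := by
      rw [← hv]
      intro i
      refine Fin.lastCases ?_ ?_ i
      · rw [hgdef, Fin.snoc_last, dot_snoc, zero_dotProduct]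
        norm_num
      · intro i
        rw [hgdef, Fin.snoc_castSucc, dot_snoc]
        have := hx i
        rw [Matrix.mulVec] at this
        simp only [Pi.le_def] at this
        nlinarith [hx i]
    obtain ⟨l, hl, hsum⟩ := hx'
    have h1 : (1:ℝ) = ∑ k, l k * t k := by
      have h := congrFun hsum (Fin.last n)
      simpa [Fin.snoc_last, Finset.sum_apply] using h
    have hxinit : x = ∑ k, l k • u k := by
      ext j
      have h := congrFun hsum (Fin.castSucc j)
      simpa [Fin.snoc_castSucc, Finset.sum_apply, hudef, Fin.init] using h
    set q : Fin n → ℝ := ∑ k, (if t k = 0 then 0 else l k) • u k with hq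
    set c : Fin n → ℝ := ∑ k, (if t k = 0 then l k else 0) • wι k with hc
    have hqc : x = q + c := by
      rw [hq, hc, hxinit, ← Finset.sum_add_distrib]
      refine Finset.sum_congr rfl fun k _ => ?_
      by_cases h : t k = 0 <;> simp [h, hwι]
    have hcmem : c ∈ cne wι :=
      ⟨_, fun k => by by_cases h : t k = 0 <;> simp [h, hl k], hc⟩
    have hqmem : q ∈ convexHull ℝ ((fun k => (t k)⁻¹ • u k) '' {k | t k ≠ 0}) := by
      have hcm := Finset.centerMass_mem_convexHull (t := Finset.univ.filter (fun k => t k ≠ 0))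
        (w := fun k => l k * t k) (z := fun k => (t k)⁻¹ • u k)
        (hw₀ := ?_) (hws := ?_) (hz := ?_)
        (s := (fun k => (t k)⁻¹ • u k) '' {k | t k ≠ 0})
      · convert hcm using 1
        rw [Finset.centerMass]
        have hsumw : ∑ k ∈ Finset.univ.filter (fun k => t k ≠ 0), l k * t k = 1 := by
          rw [Finset.sum_filter]
          rw [h1]
          refine Finset.sum_congr rfl fun k _ => ?_
          by_cases h : t k = 0 <;> simp [h]
        rw [hsumw, inv_one, one_smul, hq, Finset.sum_filter]
        refine Finset.sum_congr rfl fun k _ => ?_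
        by_cases h : t k = 0 <;> simp [h, smul_smul]
      · intro k hk
        exact mul_nonneg (hl k) (ht k)
      · rw [Finset.sum_filter]
        have : (∑ k, if t k ≠ 0 then l k * t k else 0) = 1 := by
          rw [h1]
          refine Finset.sum_congr rfl fun k _ => ?_
          by_cases h : t k = 0 <;> simp [h]
        rw [this]
        norm_num
      · intro k hk
        rw [Finset.mem_filter] at hk
        exact Set.mem_image_of_mem _ hk.2
    rw [hqc]
    exact Set.add_mem_add hqmem hcmem
  · -- conv S + cone ⊆ P
    rintro x ⟨q, hq, c, hc, rfl⟩
    have hSP : ((fun k => (t k)⁻¹ • u k) '' {k | t k ≠ 0}) ⊆ {x | ∀ i, (fun j => A i j) ⬝ᵥ x ≤ b i} := by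
      rintro _ ⟨k, hk, rfl⟩ i
      have h := hconstr k i
      have htk : 0 < t k := lt_of_le_of_ne (ht k) (Ne.symm hk)
      rw [dotProduct_smul]
      rw [smul_eq_mul]
      rw [mul_comm (b i) (t k)] at h
      calc (t k)⁻¹ * ((fun j => A i j) ⬝ᵥ u k) ≤ (t k)⁻¹ * (t k * b i) :=
            mul_le_mul_of_nonneg_left h (by positivity)
        _ = b i := by field_simp
    have hconv : Convex ℝ {x : Fin n → ℝ | ∀ i, (fun j => A i j) ⬝ᵥ x ≤ b i} := by
      intro x hx y hy a a' haa hab hab1 i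
      rw [dotProduct_add, dotProduct_smul, dotProduct_smul, smul_eq_mul, smul_eq_mul]
      have h1 := mul_le_mul_of_nonneg_left (hx i) haa
      have h2 := mul_le_mul_of_nonneg_left (hy i) hab
      have h3 : a * b i + a' * b i = b i := by rw [← add_mul, hab1, one_mul]
      linarith
    have hqP : ∀ i, (fun j => A i j) ⬝ᵥ q ≤ b i := convexHull_min hSP hconv hq
    have hcP : ∀ i, (fun j => A i j) ⬝ᵥ c ≤ 0 := by
      obtain ⟨l, hl, rfl⟩ := hc
      intro i
      rw [dot_sum]
      refine Finset.sum_nonpos fun k _ => ?_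
      rw [hwι]
      by_cases h : t k = 0
      · simp only [if_pos h]
        have := hconstr k i
        rw [h, mul_zero] at this
        exact mul_nonpos_of_nonneg_of_nonpos (hl k) this
      · simp [if_neg h]
    intro i
    have hfin : (fun j => A i j) ⬝ᵥ (q + c) ≤ b i := by
      rw [dotProduct_add]
      linarith [hqP i, hcP i]
    exact hfin
end

section
/- A subset P of ℝ^n is a polyhedron if and only if there exist a polytope Q in ℝ^n and a finitely generated convex cone C in ℝ^n such that P = Q + C. -/
open Pointwise Matrix

namespace PolyhedronAux

variable {n : ℕ}

/-- Solution set of a finite system of homogeneous linear inequalities. -/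
def polySet {ι : Type} (a : ι → (Fin n → ℝ)) : Set (Fin n → ℝ) :=
  {x | ∀ i, a i ⬝ᵥ x ≤ 0}

/-- Finitely generated cone. -/
def fgCone {ι : Type} [Fintype ι] (w : ι → (Fin n → ℝ)) : Set (Fin n → ℝ) :=
  {x | ∃ l : ι → ℝ, (∀ i, 0 ≤ l i) ∧ x = ∑ i, l i • w i}

lemma mem_fgCone_self {ι : Type} [Fintype ι] (w : ι → (Fin n → ℝ)) (j : ι) :
    w j ∈ fgCone w := by
  classical
  refine ⟨fun i => if i = j then 1 else 0, fun i => by dsimp only; split <;> norm_num, ?_⟩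
  simp [ite_smul]

lemma fgCone_reindex {ι κ : Type} [Fintype ι] [Fintype κ] (e : κ ≃ ι) (w : ι → (Fin n → ℝ)) :
    fgCone (w ∘ e) = fgCone w := by
  ext x
  constructor
  · rintro ⟨l, hl, rfl⟩
    exact ⟨l ∘ e.symm, fun i => hl _, by
      rw [← e.sum_comp (fun i => (l ∘ e.symm) i • w i)]; simp⟩
  · rintro ⟨l, hl, rfl⟩
    exact ⟨l ∘ e, fun i => hl _, by
      rw [← e.sum_comp (fun i => l i • w i)]; simp⟩

lemma fgCone_pos_smul {ι : Type} [Fintype ι] (w : ι → (Fin n → ℝ)) (c : ι → ℝ)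
    (hc : ∀ i, 0 < c i) : fgCone (fun i => c i • w i) = fgCone w := by
  ext x
  constructor
  · rintro ⟨l, hl, rfl⟩
    exact ⟨fun i => l i * c i, fun i => mul_nonneg (hl i) (hc i).le, by
      simp [smul_smul]⟩
  · rintro ⟨l, hl, rfl⟩
    refine ⟨fun i => l i / c i, fun i => div_nonneg (hl i) (hc i).le, ?_⟩
    refine Finset.sum_congr rfl fun i _ => ?_
    rw [smul_smul, div_mul_cancel₀ _ (hc i).ne']

lemma dotProduct_finsetSum {ι : Type} (s : Finset ι) (y : Fin n → ℝ) (f : ι → (Fin n → ℝ)) :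
    y ⬝ᵥ (∑ i ∈ s, f i) = ∑ i ∈ s, y ⬝ᵥ f i := by
  simp only [dotProduct, Finset.sum_apply, Finset.mul_sum]
  exact Finset.sum_comm

lemma dot_fgCone_nonpos {ι : Type} [Fintype ι] {w : ι → (Fin n → ℝ)} {x y : Fin n → ℝ}
    (hx : x ∈ fgCone w) (h : ∀ i, y ⬝ᵥ w i ≤ 0) : y ⬝ᵥ x ≤ 0 := by
  obtain ⟨l, hl, rfl⟩ := hx
  rw [dotProduct_finsetSum]
  refine Finset.sum_nonpos fun i _ => ?_
  rw [dotProduct_smul]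
  exact mul_nonpos_of_nonneg_of_nonpos (hl i) (h i)

lemma fourier_motzkin {ι : Type} [Fintype ι] (a : ι → (Fin n → ℝ)) (v : Fin n → ℝ) :
    {x | ∃ t : ℝ, 0 ≤ t ∧ ∀ i, a i ⬝ᵥ (x - t • v) ≤ 0} =
      polySet (Sum.elim (fun i : {i : ι // a i ⬝ᵥ v ≤ 0} => a i.1)
        (fun p : {p : ι × ι // 0 < a p.1 ⬝ᵥ v ∧ a p.2 ⬝ᵥ v < 0} =>
          (a p.1.1 ⬝ᵥ v) • a p.1.2 - (a p.1.2 ⬝ᵥ v) • a p.1.1)) := by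
  classical
  ext x
  simp only [Set.mem_setOf_eq, polySet, Sum.forall, Sum.elim_inl, Sum.elim_inr,
    Subtype.forall, Prod.forall]
  constructor
  · rintro ⟨t, ht, hall⟩
    have key : ∀ i, a i ⬝ᵥ x - t * (a i ⬝ᵥ v) ≤ 0 := by
      intro i
      have := hall i
      rwa [dotProduct_sub, dotProduct_smul, smul_eq_mul] at this
    constructor
    · intro i hi
      nlinarith [key i, mul_nonneg ht (neg_nonneg.2 hi)]
    · rintro i j ⟨hi, hj⟩
      rw [sub_dotProduct, smul_dotProduct, smul_dotProduct, smul_eq_mul, smul_eq_mul]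
      nlinarith [key i, key j, hi, hj]
  · rintro ⟨h1, h2⟩
    set F : Finset ℝ :=
      insert 0 (Finset.univ.image fun i => if 0 < a i ⬝ᵥ v then (a i ⬝ᵥ x) / (a i ⬝ᵥ v) else 0)
      with hF
    have h0F : (0 : ℝ) ∈ F := Finset.mem_insert_self _ _
    set t : ℝ := F.max' ⟨0, h0F⟩ with htdef
    have ht0 : 0 ≤ t := Finset.le_max' F 0 h0F
    refine ⟨t, ht0, fun i => ?_⟩
    rw [dotProduct_sub, dotProduct_smul, smul_eq_mul, sub_nonpos]
    rcases lt_trichotomy 0 (a i ⬝ᵥ v) with hc | hc | hc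
    · have hmem : (a i ⬝ᵥ x) / (a i ⬝ᵥ v) ∈ F := by
        refine Finset.mem_insert_of_mem ?_
        refine Finset.mem_image.2 ⟨i, Finset.mem_univ i, ?_⟩
        rw [if_pos hc]
      have := Finset.le_max' F _ hmem
      calc a i ⬝ᵥ x = (a i ⬝ᵥ x) / (a i ⬝ᵥ v) * (a i ⬝ᵥ v) := by
            rw [div_mul_cancel₀ _ hc.ne']
        _ ≤ t * (a i ⬝ᵥ v) := by
            exact mul_le_mul_of_nonneg_right this hc.le
    · have := h1 i (le_of_eq hc.symm)
      rw [← hc, mul_zero]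
      exact this
    · -- a i ⬝ᵥ v < 0 : need a i ⬝ᵥ x ≤ t * (a i ⬝ᵥ v), i.e. t ≤ (a i ⬝ᵥ x)/(a i ⬝ᵥ v)
      have hdi : a i ⬝ᵥ x ≤ 0 := h1 i hc.le
      have htle : t ≤ (a i ⬝ᵥ x) / (a i ⬝ᵥ v) := by
        refine Finset.max'_le _ _ _ fun y hy => ?_
        rw [hF, Finset.mem_insert] at hy
        rcases hy with rfl | hy
        · exact div_nonneg_of_nonpos hdi hc.le
        · obtain ⟨j, -, rfl⟩ := Finset.mem_image.1 hy
          split_ifs with hj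
          · have hpair := h2 j i ⟨hj, hc⟩
            rw [sub_dotProduct, smul_dotProduct, smul_dotProduct, smul_eq_mul,
              smul_eq_mul] at hpair
            -- hpair : (a j ⬝ᵥ v) * (a i ⬝ᵥ x) - (a i ⬝ᵥ v) * (a j ⬝ᵥ x) ≤ 0
            nlinarith [hpair, mul_pos hj (neg_pos.2 hc),
              div_mul_cancel₀ (a j ⬝ᵥ x) hj.ne', div_mul_cancel₀ (a i ⬝ᵥ x) hc.ne]
          · exact div_nonneg_of_nonpos hdi hc.le
      calc a i ⬝ᵥ x = (a i ⬝ᵥ x) / (a i ⬝ᵥ v) * (a i ⬝ᵥ v) := by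
            rw [div_mul_cancel₀ _ hc.ne]
        _ ≤ t * (a i ⬝ᵥ v) := by
            exact mul_le_mul_of_nonpos_right htle hc.le

lemma fgCone_succ {r : ℕ} (w : Fin (r + 1) → (Fin n → ℝ)) :
    fgCone w = {x | ∃ t : ℝ, 0 ≤ t ∧ (x - t • w 0) ∈ fgCone (Fin.tail w)} := by
  ext x
  constructor
  · rintro ⟨l, hl, rfl⟩
    refine ⟨l 0, hl 0, fun i => l i.succ, fun i => hl i.succ, ?_⟩
    simp only [Fin.tail]
    rw [Fin.sum_univ_succ]
    abel
  · rintro ⟨t, ht, l, hl, hx⟩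
    refine ⟨Fin.cons t l, fun i => ?_, ?_⟩
    · refine Fin.cases ?_ ?_ i
      · simpa using ht
      · intro j; simpa using hl j
    · rw [Fin.sum_univ_succ]
      simp only [Fin.cons_zero, Fin.cons_succ]
      simp only [Fin.tail] at hx
      rw [← hx]
      abel

lemma weyl_fin : ∀ (r : ℕ) (w : Fin r → (Fin n → ℝ)),
    ∃ (κ : Type) (_ : Fintype κ) (a : κ → (Fin n → ℝ)), fgCone w = polySet a := by
  intro r
  induction r with
  | zero =>
    intro w
    refine ⟨Fin n ⊕ Fin n, inferInstance,
      Sum.elim (fun i => Pi.single i 1) (fun i => -(Pi.single i 1)), ?_⟩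
    ext x
    constructor
    · rintro ⟨l, -, rfl⟩
      simp only [Finset.univ_eq_empty, Finset.sum_empty, polySet, Set.mem_setOf_eq]
      rintro (i | i) <;> simp
    · intro hx
      have hzero : x = 0 := by
        funext i
        have h1 := hx (Sum.inl i)
        have h2 := hx (Sum.inr i)
        simp only [Sum.elim_inl, Sum.elim_inr, neg_dotProduct, single_dotProduct,
          one_mul, neg_nonpos] at h1 h2
        exact le_antisymm h1 h2
      exact ⟨0, fun i => le_rfl, by simp [hzero]⟩
  | succ r ih =>
    intro w
    obtain ⟨κ, hκ, a, ha⟩ := ih (Fin.tail w)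
    rw [fgCone_succ, ha]
    exact ⟨_, inferInstance, _, fourier_motzkin a (w 0)⟩

lemma weyl {ι : Type} [Fintype ι] (w : ι → (Fin n → ℝ)) :
    ∃ (κ : Type) (_ : Fintype κ) (a : κ → (Fin n → ℝ)), fgCone w = polySet a := by
  obtain ⟨κ, hκ, a, ha⟩ := weyl_fin (Fintype.card ι) (w ∘ (Fintype.equivFin ι).symm)
  exact ⟨κ, hκ, a, by rw [← fgCone_reindex (Fintype.equivFin ι).symm w, ha]⟩

lemma minkowski {ι : Type} [Fintype ι] (a : ι → (Fin n → ℝ)) :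
    ∃ (r : ℕ) (w : Fin r → (Fin n → ℝ)), polySet a = fgCone w := by
  obtain ⟨κ, hκ, b, hb⟩ := weyl a
  have key : polySet a = fgCone b := by
    apply Set.eq_of_subset_of_subset
    · intro x hx
      by_contra hxb
      obtain ⟨κ₂, hκ₂, c, hc⟩ := weyl b
      rw [hc] at hxb
      simp only [polySet, Set.mem_setOf_eq, not_forall, not_le] at hxb
      obtain ⟨l, hl⟩ := hxb
      have hcl : c l ∈ polySet b := by
        intro k
        have hbk : b k ∈ fgCone b := mem_fgCone_self b k
        rw [hc] at hbk
        have := hbk l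
        rwa [dotProduct_comm] at this
      rw [← hb] at hcl
      have : x ⬝ᵥ c l ≤ 0 := by
        refine dot_fgCone_nonpos hcl fun i => ?_
        rw [dotProduct_comm]
        exact hx i
      rw [dotProduct_comm] at this
      exact absurd hl (not_lt.2 this)
    · intro x hx
      intro i
      have hai : a i ∈ fgCone a := mem_fgCone_self a i
      rw [hb] at hai
      refine dot_fgCone_nonpos hx fun k => ?_
      rw [dotProduct_comm]
      exact hai k
  refine ⟨Fintype.card κ, b ∘ (Fintype.equivFin κ).symm, ?_⟩
  rw [key, fgCone_reindex (Fintype.equivFin κ).symm b]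

lemma cons_add_cons' (a : ℝ) (x : Fin n → ℝ) (b : ℝ) (y : Fin n → ℝ) :
    (Fin.cons a x + Fin.cons b y : Fin (n + 1) → ℝ) = Fin.cons (a + b) (x + y) := by
  funext j
  refine Fin.cases ?_ ?_ j <;> simp

lemma smul_cons' (c a : ℝ) (x : Fin n → ℝ) :
    c • (Fin.cons a x : Fin (n + 1) → ℝ) = Fin.cons (c * a) (c • x) := by
  funext j
  refine Fin.cases ?_ ?_ j <;> simp

lemma sum_cons' {ι : Type} [Fintype ι] (f : ι → ℝ) (g : ι → (Fin n → ℝ)) :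
    ∑ i, (Fin.cons (f i) (g i) : Fin (n + 1) → ℝ) = Fin.cons (∑ i, f i) (∑ i, g i) := by
  funext j
  refine Fin.cases ?_ ?_ j <;> simp [Finset.sum_apply]

lemma dot_split (f y : Fin (n + 1) → ℝ) :
    f ⬝ᵥ y = f 0 * y 0 + Fin.tail f ⬝ᵥ Fin.tail y := by
  conv_lhs => rw [← Fin.cons_self_tail f, ← Fin.cons_self_tail y]
  exact Matrix.cons_dotProduct_cons _ _ _ _

lemma convex_dotLE (f : Fin n → ℝ) (c : ℝ) : Convex ℝ {y : Fin n → ℝ | f ⬝ᵥ y ≤ c} :=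
  convex_halfSpace_le
    ⟨fun a b => dotProduct_add f a b, fun r a => by rw [dotProduct_smul]⟩ c

lemma mulVec_apply' {m : ℕ} (A : Matrix (Fin m) (Fin n) ℝ) (x : Fin n → ℝ) (i : Fin m) :
    A.mulVec x i = A i ⬝ᵥ x := rfl

lemma forward (m : ℕ) (A : Matrix (Fin m) (Fin n) ℝ) (b : Fin m → ℝ) :
    ∃ (S : Set (Fin n → ℝ)) (_ : S.Finite) (r : ℕ) (w : Fin r → (Fin n → ℝ)),
      {x : Fin n → ℝ | A.mulVec x ≤ b} = convexHull ℝ S + fgCone w := by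
  classical
  set aa : (Fin m ⊕ Unit) → (Fin (n + 1) → ℝ) :=
    Sum.elim (fun i => Fin.cons (-(b i)) (A i)) (fun _ => Fin.cons (-1) 0) with haa
  have haa0 : ∀ i, aa (Sum.inl i) 0 = -(b i) := fun i => by simp [haa]
  have haatail : ∀ i, Fin.tail (aa (Sum.inl i)) = A i := fun i => by
    funext j; simp [haa, Fin.tail]
  have hmem : ∀ x : Fin n → ℝ, A.mulVec x ≤ b ↔ (Fin.cons 1 x : Fin (n + 1) → ℝ) ∈ polySet aa := by
    intro x
    constructor
    · intro hx
      rintro (i | i)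
      · have h1 := hx i
        rw [mulVec_apply'] at h1
        rw [dot_split, haa0, haatail]
        simp only [Fin.cons_zero, Fin.tail_cons]
        linarith
      · rw [dot_split]
        simp [haa]
    · intro hx i
      have h1 := hx (Sum.inl i)
      rw [dot_split, haa0, haatail] at h1
      simp only [Fin.cons_zero, Fin.tail_cons] at h1
      rw [mulVec_apply']
      linarith
  obtain ⟨r, v, hv⟩ := minkowski aa
  have hvt : ∀ j, 0 ≤ v j 0 := by
    intro j
    have hj : v j ∈ polySet aa := by rw [hv]; exact mem_fgCone_self v j
    have h1 := hj (Sum.inr ())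
    rw [dot_split] at h1
    simp only [haa, Sum.elim_inr, Fin.cons_zero, Fin.tail_cons, zero_dotProduct, add_zero] at h1
    linarith
  set c : Fin r → ℝ := fun j => if v j 0 = 0 then 1 else (v j 0)⁻¹ with hcdef
  have hcpos : ∀ j, 0 < c j := by
    intro j
    by_cases h : v j 0 = 0
    · simp [hcdef, h]
    · simp only [hcdef, if_neg h]
      exact inv_pos.2 (lt_of_le_of_ne (hvt j) (Ne.symm h))
  set u : Fin r → (Fin (n + 1) → ℝ) := fun j => c j • v j with hudef
  have hu : fgCone u = polySet aa := by
    rw [hudef, fgCone_pos_smul v c hcpos, ← hv]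
  have hu01 : ∀ j, u j 0 = 0 ∨ u j 0 = 1 := by
    intro j
    by_cases h : v j 0 = 0
    · left; simp [hudef, h]
    · right
      simp only [hudef, hcdef, if_neg h, Pi.smul_apply, smul_eq_mul]
      exact inv_mul_cancel₀ h
  set S : Set (Fin n → ℝ) := (Fin.tail ∘ u) '' {j | u j 0 = 1} with hSdef
  have hSfin : S.Finite := (Set.toFinite _).image _
  set w : Fin r → (Fin n → ℝ) := fun j => if u j 0 = 0 then Fin.tail (u j) else 0 with hwdef
  refine ⟨S, hSfin, r, w, ?_⟩
  ext x
  simp only [Set.mem_setOf_eq]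
  constructor
  · intro hx
    have hx1 : (Fin.cons 1 x : Fin (n + 1) → ℝ) ∈ fgCone u := by
      rw [hu]; exact (hmem x).1 hx
    obtain ⟨l, hl, heq⟩ := hx1
    have comp0 : (1 : ℝ) = ∑ j, l j * u j 0 := by
      have h1 := congrFun heq 0
      simpa [Finset.sum_apply] using h1
    have compt : x = ∑ j, l j • Fin.tail (u j) := by
      funext i
      have h1 := congrFun heq i.succ
      simpa [Finset.sum_apply, Fin.tail] using h1
    set T : Finset (Fin r) := Finset.univ.filter (fun j => u j 0 = 1) with hT
    have hsum1 : ∑ j ∈ T, l j = 1 := by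
      have hsplit := Finset.sum_filter_add_sum_filter_not Finset.univ
        (fun j => u j 0 = 1) (fun j => l j * u j 0)
      have h1 : ∑ j ∈ T, l j * u j 0 = ∑ j ∈ T, l j :=
        Finset.sum_congr rfl fun j hj => by
          rw [(Finset.mem_filter.1 hj).2, mul_one]
      have h2 : ∑ j ∈ Finset.univ.filter (fun j => ¬(u j 0 = 1)), l j * u j 0 = 0 := by
        refine Finset.sum_eq_zero fun j hj => ?_
        have := (Finset.mem_filter.1 hj).2
        rcases hu01 j with h | h
        · rw [h, mul_zero]
        · exact absurd h this
      rw [← h1, comp0, ← hsplit, h2, add_zero]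
    have hq : (∑ j ∈ T, l j • Fin.tail (u j)) ∈ convexHull ℝ S := by
      have hmemcc := T.centerMass_mem_convexHull (w := l) (z := Fin.tail ∘ u) (s := S)
        (fun j hj => hl j) (by rw [hsum1]; norm_num)
        (fun j hj => ⟨j, (Finset.mem_filter.1 hj).2, rfl⟩)
      rwa [Finset.centerMass_eq_of_sum_1 _ _ hsum1] at hmemcc
    have hcc : (∑ j, l j • w j) ∈ fgCone w := ⟨l, hl, rfl⟩
    have hx_eq : x = (∑ j ∈ T, l j • Fin.tail (u j)) + ∑ j, l j • w j := by
      have hw_split := Finset.sum_filter_add_sum_filter_not Finset.univ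
        (fun j => u j 0 = 1) (fun j => l j • w j)
      have hw1 : ∑ j ∈ T, l j • w j = 0 := by
        refine Finset.sum_eq_zero fun j hj => ?_
        have h1 := (Finset.mem_filter.1 hj).2
        have : w j = 0 := by
          rw [hwdef]
          simp only [h1]
          norm_num
        rw [this, smul_zero]
      have hw2 : ∑ j ∈ Finset.univ.filter (fun j => ¬(u j 0 = 1)), l j • w j
          = ∑ j ∈ Finset.univ.filter (fun j => ¬(u j 0 = 1)), l j • Fin.tail (u j) := by
        refine Finset.sum_congr rfl fun j hj => ?_
        have h1 := (Finset.mem_filter.1 hj).2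
        rcases hu01 j with h | h
        · rw [hwdef]; simp only [h]; norm_num
        · exact absurd h h1
      rw [compt, ← Finset.sum_filter_add_sum_filter_not Finset.univ
        (fun j => u j 0 = 1) (fun j => l j • Fin.tail (u j)), ← hw_split, hw1, hw2]
      abel
    rw [hx_eq]
    exact Set.add_mem_add hq hcc
  · rintro ⟨q, hq, cc, hcc, rfl⟩
    refine (hmem _).2 ?_
    have hq' : ∀ k, aa k ⬝ᵥ (Fin.cons 1 q : Fin (n + 1) → ℝ) ≤ 0 := by
      intro k
      have hhs : S ⊆ {y : Fin n → ℝ | Fin.tail (aa k) ⬝ᵥ y ≤ -(aa k 0)} := by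
        rintro s ⟨j, hj, rfl⟩
        have hmj : u j ∈ polySet aa := by rw [← hu]; exact mem_fgCone_self u j
        have h1 := hmj k
        rw [dot_split] at h1
        simp only [Set.mem_setOf_eq] at hj
        rw [hj, mul_one] at h1
        simp only [Set.mem_setOf_eq, Function.comp_apply]
        linarith
      have h2 := convexHull_min hhs (convex_dotLE _ _) hq
      rw [dot_split]
      simp only [Fin.cons_zero, Fin.tail_cons]
      have := h2
      simp only [Set.mem_setOf_eq] at this
      linarith
    have hc' : ∀ k, aa k ⬝ᵥ (Fin.cons 0 cc : Fin (n + 1) → ℝ) ≤ 0 := by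
      intro k
      obtain ⟨l, hl, rfl⟩ := hcc
      have hconseq : (Fin.cons 0 (∑ j, l j • w j) : Fin (n + 1) → ℝ)
          = ∑ j, l j • (Fin.cons 0 (w j) : Fin (n + 1) → ℝ) := by
        have : ∀ j, l j • (Fin.cons 0 (w j) : Fin (n + 1) → ℝ)
            = Fin.cons (l j * 0) (l j • w j) := fun j => smul_cons' _ _ _
        simp only [this, sum_cons', mul_zero, Finset.sum_const_zero]
      rw [hconseq, dotProduct_finsetSum]
      refine Finset.sum_nonpos fun j _ => ?_
      rw [dotProduct_smul, smul_eq_mul]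
      refine mul_nonpos_of_nonneg_of_nonpos (hl j) ?_
      by_cases h0 : u j 0 = 0
      · have hwj : w j = Fin.tail (u j) := by rw [hwdef]; simp [h0]
        have hcons : (Fin.cons 0 (w j) : Fin (n + 1) → ℝ) = u j := by
          rw [hwj, ← h0, Fin.cons_self_tail]
        rw [hcons]
        have hmj : u j ∈ polySet aa := by rw [← hu]; exact mem_fgCone_self u j
        exact hmj k
      · have hwj : w j = 0 := by rw [hwdef]; simp [h0]
        rw [hwj]
        have : (Fin.cons 0 (0 : Fin n → ℝ) : Fin (n + 1) → ℝ) = 0 := by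
          funext j'; refine Fin.cases ?_ ?_ j' <;> simp
        rw [this, dotProduct_zero]
    intro k
    have hsplit : (Fin.cons 1 (q + cc) : Fin (n + 1) → ℝ)
        = Fin.cons 1 q + Fin.cons 0 cc := by
      rw [cons_add_cons', add_zero]
    rw [hsplit, dotProduct_add]
    linarith [hq' k, hc' k]

lemma backward (S : Set (Fin n → ℝ)) (hS : S.Finite) (r : ℕ) (w : Fin r → (Fin n → ℝ)) :
    ∃ (m : ℕ) (_ : 0 < m) (A : Matrix (Fin m) (Fin n) ℝ) (b : Fin m → ℝ),
      convexHull ℝ S + fgCone w = {x | A.mulVec x ≤ b} := by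
  classical
  set g : (↥hS.toFinset ⊕ Fin r) → (Fin (n + 1) → ℝ) :=
    Sum.elim (fun s => Fin.cons 1 (s : Fin n → ℝ)) (fun i => Fin.cons 0 (w i)) with hg
  have key : ∀ x : Fin n → ℝ,
      x ∈ convexHull ℝ S + fgCone w ↔ (Fin.cons 1 x : Fin (n + 1) → ℝ) ∈ fgCone g := by
    intro x
    constructor
    · rintro ⟨q, hq, cc, hcc, rfl⟩
      rw [← hS.coe_toFinset] at hq
      obtain ⟨μ, hμ0, hμ1, hμq⟩ := Finset.mem_convexHull'.1 hq
      obtain ⟨l, hl, rfl⟩ := hcc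
      refine ⟨Sum.elim (fun s : ↥hS.toFinset => μ (s : Fin n → ℝ)) l, ?_, ?_⟩
      · rintro (s | i)
        · exact hμ0 _ s.2
        · exact hl i
      · rw [Fintype.sum_sum_type]
        simp only [Sum.elim_inl, Sum.elim_inr, hg]
        have h1 : ∑ s : ↥hS.toFinset, μ (s : Fin n → ℝ) • (Fin.cons 1 (s : Fin n → ℝ) : Fin (n + 1) → ℝ)
            = Fin.cons 1 q := by
          have : ∀ s : ↥hS.toFinset, μ (s : Fin n → ℝ) • (Fin.cons 1 (s : Fin n → ℝ) : Fin (n + 1) → ℝ)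
              = Fin.cons (μ (s : Fin n → ℝ) * 1) (μ (s : Fin n → ℝ) • (s : Fin n → ℝ)) :=
            fun s => smul_cons' _ _ _
          rw [funext this, sum_cons']
          simp only [mul_one]
          rw [Finset.sum_coe_sort hS.toFinset (fun y => μ y),
            Finset.sum_coe_sort hS.toFinset (fun y => μ y • y), hμ1, hμq]
        have h2 : ∑ i : Fin r, l i • (Fin.cons 0 (w i) : Fin (n + 1) → ℝ)
            = Fin.cons 0 (∑ i, l i • w i) := by
          have : ∀ i, l i • (Fin.cons 0 (w i) : Fin (n + 1) → ℝ)
              = Fin.cons (l i * 0) (l i • w i) := fun i => smul_cons' _ _ _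
          rw [funext this, sum_cons']
          simp
        rw [h1, h2, cons_add_cons', add_zero]
    · rintro ⟨L, hL, heq⟩
      rw [Fintype.sum_sum_type] at heq
      simp only [hg, Sum.elim_inl, Sum.elim_inr] at heq
      have h1 : ∀ s : ↥hS.toFinset, L (Sum.inl s) • (Fin.cons 1 (s : Fin n → ℝ) : Fin (n + 1) → ℝ)
          = Fin.cons (L (Sum.inl s) * 1) (L (Sum.inl s) • (s : Fin n → ℝ)) :=
        fun s => smul_cons' _ _ _
      have h2 : ∀ i : Fin r, L (Sum.inr i) • (Fin.cons 0 (w i) : Fin (n + 1) → ℝ)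
          = Fin.cons (L (Sum.inr i) * 0) (L (Sum.inr i) • w i) :=
        fun i => smul_cons' _ _ _
      rw [funext h1, funext h2, sum_cons', sum_cons', cons_add_cons'] at heq
      have comp0 : (1 : ℝ) = (∑ s : ↥hS.toFinset, L (Sum.inl s) * 1)
          + ∑ i : Fin r, L (Sum.inr i) * 0 := congrFun heq 0
      have compt : x = (∑ s : ↥hS.toFinset, L (Sum.inl s) • (s : Fin n → ℝ))
          + ∑ i : Fin r, L (Sum.inr i) • w i := by
        funext j
        exact congrFun heq j.succ
      simp only [mul_one, mul_zero, Finset.sum_const_zero, add_zero] at comp0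
      have hqmem : (∑ s : ↥hS.toFinset, L (Sum.inl s) • (s : Fin n → ℝ)) ∈ convexHull ℝ S := by
        have hcm := Finset.centerMass_mem_convexHull (Finset.univ : Finset ↥hS.toFinset)
          (w := fun s => L (Sum.inl s)) (z := fun s => (s : Fin n → ℝ)) (s := S)
          (fun s _ => hL _) (by rw [← comp0]; norm_num)
          (fun s _ => hS.mem_toFinset.1 s.2)
        rwa [Finset.centerMass_eq_of_sum_1 _ _ comp0.symm] at hcm
      have hcmem : (∑ i : Fin r, L (Sum.inr i) • w i) ∈ fgCone w :=
        ⟨fun i => L (Sum.inr i), fun i => hL _, rfl⟩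
      rw [compt]
      exact Set.add_mem_add hqmem hcmem
  obtain ⟨κ, hκ, a, ha⟩ := weyl g
  set e := Fintype.equivFin κ with he
  refine ⟨Fintype.card κ + 1, Nat.succ_pos _,
    Fin.cons 0 (fun k => Fin.tail (a (e.symm k))),
    Fin.cons 0 (fun k => -(a (e.symm k) 0)), ?_⟩
  ext x
  rw [key x, ha]
  simp only [polySet, Set.mem_setOf_eq]
  constructor
  · intro hx
    intro i
    change (Fin.cons 0 (fun k => Fin.tail (a (e.symm k))) : Fin (Fintype.card κ + 1) → Fin n → ℝ) i ⬝ᵥ x ≤ _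
    refine Fin.cases ?_ ?_ i
    · simp
    · intro k
      have h1 := hx (e.symm k)
      rw [dot_split] at h1
      simp only [Fin.cons_zero, Fin.tail_cons, mul_one] at h1
      simp only [Fin.cons_succ]
      linarith
  · intro hx k
    have h1 := hx (Fin.succ (e k))
    change (Fin.cons 0 (fun k => Fin.tail (a (e.symm k))) : Fin (Fintype.card κ + 1) → Fin n → ℝ) (Fin.succ (e k)) ⬝ᵥ x ≤ _ at h1
    simp only [Fin.cons_succ, Equiv.symm_apply_apply] at h1
    rw [dot_split]
    simp only [Fin.cons_zero, Fin.tail_cons, mul_one]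
    linarith

end PolyhedronAux

/-- Structure theorem for polyhedra: P ⊆ ℝ^n is a polyhedron if and only if it is
the Minkowski sum of a polytope and a finitely generated convex cone. -/
theorem polyhedron_iff_polytope_add_cone (n : ℕ) (P : Set (Fin n → ℝ)) :
    (∃ (m : ℕ) (_ : 0 < m) (A : Matrix (Fin m) (Fin n) ℝ) (b : Fin m → ℝ),
        P = {x : Fin n → ℝ | A.mulVec x ≤ b}) ↔
      (∃ (S : Set (Fin n → ℝ)) (_ : S.Finite) (r : ℕ) (w : Fin r → (Fin n → ℝ)),
        P = convexHull ℝ S +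
          {x : Fin n → ℝ | ∃ l : Fin r → ℝ, (∀ i, 0 ≤ l i) ∧ x = ∑ i, l i • w i}) := by
  constructor
  · rintro ⟨m, hm, A, b, rfl⟩
    obtain ⟨S, hSfin, r, w, hP⟩ := PolyhedronAux.forward m A b
    exact ⟨S, hSfin, r, w, hP⟩
  · rintro ⟨S, hSfin, r, w, rfl⟩
    obtain ⟨m, hm, A, b, hP⟩ := PolyhedronAux.backward S hSfin r w
    exact ⟨m, hm, A, b, hP⟩
end
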